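/- arXiv:2101.04618 — 11 statements merged into one kernel-verified Lean document; each statement's English description precedes it below -/
import Mathlib

section
/- Fix real numbers v with 0 < v < 1/2 and α with 0 ≤ α ≤ 1. Define π(y) = y for y ∈ [0, √(2v)] and π(y) = y + α − √(α² + y² − 2v) for y ∈ (√(2v), 1]. If α < √(2v), then y = √(2v) is the unique maximizer of π on [0,1]. If α ≥ √(2v), then π is nondecreasing on [0,1], so y = 1 maximizes π on [0,1]. -/
/-- With 0 < v < 1/2, 0 ≤ α ≤ 1, π(y) = y on [0,√(2v)] and
π(y) = y + α − √(α² + y² − 2v) on (√(2v),1]. If α < √(2v) then y = √(2v) is the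
unique maximizer of π on [0,1]; if α ≥ √(2v) then π is nondecreasing on [0,1],
so y = 1 maximizes π on [0,1]. -/
theorem stmt_1 (v α : ℝ) (hv : 0 < v ∧ v < 1 / 2) (hα : 0 ≤ α ∧ α ≤ 1)
    (π : ℝ → ℝ)
    (hπ1 : ∀ y ∈ Set.Icc (0:ℝ) (Real.sqrt (2 * v)), π y = y)
    (hπ2 : ∀ y, Real.sqrt (2 * v) < y → y ≤ 1 →
      π y = y + α - Real.sqrt (α ^ 2 + y ^ 2 - 2 * v)) :
    (α < Real.sqrt (2 * v) →
      (∀ y ∈ Set.Icc (0:ℝ) 1, y ≠ Real.sqrt (2 * v) → π y < π (Real.sqrt (2 * v)))) ∧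
    (Real.sqrt (2 * v) ≤ α →
      MonotoneOn π (Set.Icc (0:ℝ) 1) ∧ ∀ y ∈ Set.Icc (0:ℝ) 1, π y ≤ π 1) := by
  obtain ⟨hv0, hv1⟩ := hv
  obtain ⟨hα0, hα1⟩ := hα
  set s := Real.sqrt (2 * v) with hs_def
  have h2v : (0:ℝ) ≤ 2 * v := by linarith
  have hs2 : s ^ 2 = 2 * v := Real.sq_sqrt h2v
  have hs0 : 0 ≤ s := Real.sqrt_nonneg _
  have hs_pos : 0 < s := by nlinarith
  have hs1 : s < 1 := by nlinarith
  have hπs : π s = s := hπ1 s ⟨hs0, le_refl s⟩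
  constructor
  · intro hαs y hy hne
    rcases le_or_gt y s with hys | hys
    · rw [hπ1 y ⟨hy.1, hys⟩, hπs]
      exact lt_of_le_of_ne hys hne
    · rw [hπ2 y hys hy.2, hπs]
      have hA : (0:ℝ) ≤ α ^ 2 + y ^ 2 - 2 * v := by nlinarith
      have hkey : y + α - s < Real.sqrt (α ^ 2 + y ^ 2 - 2 * v) := by
        have h1 : (y + α - s) ^ 2 < α ^ 2 + y ^ 2 - 2 * v := by nlinarith
        have h2 : 0 ≤ y + α - s := by linarith
        nlinarith [Real.sq_sqrt hA, Real.sqrt_nonneg (α ^ 2 + y ^ 2 - 2 * v)]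
      linarith
  · intro hαs
    -- key: for s < y, π y ≥ s and π is given by the formula; also √A ≥ y
    have key : ∀ y, s < y → y ≤ 1 →
        y ≤ Real.sqrt (α ^ 2 + y ^ 2 - 2 * v) ∧
        Real.sqrt (α ^ 2 + y ^ 2 - 2 * v) ≤ y + α - s := by
      intro y hsy hy1
      have hA : (0:ℝ) ≤ α ^ 2 + y ^ 2 - 2 * v := by nlinarith
      constructor
      · have : y ^ 2 ≤ α ^ 2 + y ^ 2 - 2 * v := by nlinarith
        calc y = Real.sqrt (y ^ 2) := by
                rw [Real.sqrt_sq (by linarith : (0:ℝ) ≤ y)]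
          _ ≤ _ := Real.sqrt_le_sqrt this
      · have h1 : α ^ 2 + y ^ 2 - 2 * v ≤ (y + α - s) ^ 2 := by
          nlinarith [mul_nonneg (sub_nonneg.mpr hsy.le) (sub_nonneg.mpr hαs)]
        calc Real.sqrt (α ^ 2 + y ^ 2 - 2 * v) ≤ Real.sqrt ((y + α - s) ^ 2) :=
              Real.sqrt_le_sqrt h1
          _ = y + α - s := Real.sqrt_sq (by linarith)
    have hmono : MonotoneOn π (Set.Icc (0:ℝ) 1) := by
      intro a ha b hb hab
      rcases le_or_gt b s with hbs | hbs
      · rw [hπ1 a ⟨ha.1, le_trans hab hbs⟩, hπ1 b ⟨hb.1, hbs⟩]; exact hab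
      · rcases le_or_gt a s with has | has
        · rw [hπ1 a ⟨ha.1, has⟩, hπ2 b hbs hb.2]
          have := (key b hbs hb.2).2
          linarith
        · rw [hπ2 a has ha.2, hπ2 b hbs hb.2]
          have hA : (0:ℝ) ≤ α ^ 2 + a ^ 2 - 2 * v := by nlinarith
          have hB : (0:ℝ) ≤ α ^ 2 + b ^ 2 - 2 * v := by nlinarith
          have ha' := (key a has ha.2).1
          have hb' := (key b hbs hb.2).1
          nlinarith [Real.sq_sqrt hA, Real.sq_sqrt hB,
            Real.sqrt_nonneg (α ^ 2 + a ^ 2 - 2 * v),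
            Real.sqrt_nonneg (α ^ 2 + b ^ 2 - 2 * v)]
    exact ⟨hmono, fun y hy => hmono hy ⟨by norm_num, le_refl 1⟩ hy.2⟩
end

section
/- Fix real numbers v with 0 < v < 1/2 and α ≥ 0. The function π̂_α(p) = p(1 + α − √(α² + 1 − 2v + 2p)) is strictly concave on [0, ∞); in particular its second derivative equals (−2(α²+1) − 3p + 4v)/(α² + 2p − 2v + 1)^{3/2}, which is negative for every p ≥ 0. -/
/-!
With `s = √(c + 2p)` we have `s' = 1 / s`, so the first derivative of `p (a - s)` is
`a - s - p / s` and the second is `(p - 2 s²) / s³ = (-2c - 3p) / (c + 2p)^{3/2}`, which is negative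
as soon as `c ≥ 0` and `c + 2p > 0`. For the profit function `c = α² + 1 - 2v > 0` because `v < 1/2`.
-/

open Real Set

namespace SqrtProfit

variable {a c p : ℝ}

theorem hasDerivAt_sqrt_const_add_two_mul (hp : 0 < c + 2 * p) :
    HasDerivAt (fun q => √(c + 2 * q)) (1 / √(c + 2 * p)) p := by
  have hlin : HasDerivAt (fun q : ℝ => c + 2 * q) 2 p := by
    simpa using ((hasDerivAt_id p).const_mul (2 : ℝ)).const_add c
  refine ((hasDerivAt_sqrt hp.ne').comp p hlin).congr_deriv ?_
  have : √(c + 2 * p) ≠ 0 := (sqrt_pos.2 hp).ne'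
  field_simp

theorem hasDerivAt_mul_sub_sqrt (hp : 0 < c + 2 * p) :
    HasDerivAt (fun q => q * (a - √(c + 2 * q)))
      (a - √(c + 2 * p) - p / √(c + 2 * p)) p := by
  refine ((hasDerivAt_id p).mul
    ((hasDerivAt_const p a).sub (hasDerivAt_sqrt_const_add_two_mul hp))).congr_deriv ?_
  have : √(c + 2 * p) ≠ 0 := (sqrt_pos.2 hp).ne'
  simp only [id, Pi.sub_apply]
  field_simp
  ring

theorem rpow_three_halves {x : ℝ} (hx : 0 ≤ x) : x ^ ((3 : ℝ) / 2) = √x ^ 3 := by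
  rw [sqrt_eq_rpow, ← rpow_natCast, ← rpow_mul hx]
  norm_num

theorem hasDerivAt_sub_sqrt_sub_div_sqrt (hp : 0 < c + 2 * p) :
    HasDerivAt (fun q => a - √(c + 2 * q) - q / √(c + 2 * q))
      ((-2 * c - 3 * p) / (c + 2 * p) ^ ((3 : ℝ) / 2)) p := by
  have hs := hasDerivAt_sqrt_const_add_two_mul hp
  have hs0 : √(c + 2 * p) ≠ 0 := (sqrt_pos.2 hp).ne'
  refine (((hasDerivAt_const p a).sub hs).sub ((hasDerivAt_id p).div hs hs0)).congr_deriv ?_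
  have hsq : √(c + 2 * p) ^ 2 = c + 2 * p := sq_sqrt hp.le
  rw [rpow_three_halves hp.le]
  simp only [id]
  field_simp
  linear_combination (-2 : ℝ) * hsq

theorem deriv_deriv_mul_sub_sqrt (hp : 0 < c + 2 * p) :
    deriv (deriv fun q => q * (a - √(c + 2 * q))) p =
      (-2 * c - 3 * p) / (c + 2 * p) ^ ((3 : ℝ) / 2) := by
  have hnhds : ∀ᶠ q in nhds p, 0 < c + 2 * q :=
    (isOpen_lt continuous_const (by fun_prop)).mem_nhds hp
  have hderiv : deriv (fun q => q * (a - √(c + 2 * q))) =ᶠ[nhds p]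
      fun q => a - √(c + 2 * q) - q / √(c + 2 * q) :=
    hnhds.mono fun q hq => (hasDerivAt_mul_sub_sqrt hq).deriv
  rw [hderiv.deriv_eq]
  exact (hasDerivAt_sub_sqrt_sub_div_sqrt hp).deriv

theorem neg_div_rpow_three_halves_neg (hc : 0 ≤ c) (hp : 0 < c + 2 * p) :
    (-2 * c - 3 * p) / (c + 2 * p) ^ ((3 : ℝ) / 2) < 0 :=
  div_neg_of_neg_of_pos (by linarith) (rpow_pos_of_pos hp _)

theorem strictConcaveOn_mul_sub_sqrt (hc : 0 ≤ c) :
    StrictConcaveOn ℝ (Ici (-c / 2)) fun q => q * (a - √(c + 2 * q)) := by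
  refine strictConcaveOn_of_deriv2_neg (convex_Ici _) (by fun_prop) fun q hq => ?_
  rw [interior_Ici, mem_Ioi] at hq
  have hq' : 0 < c + 2 * q := by linarith
  change deriv (deriv _) q < 0
  rw [deriv_deriv_mul_sub_sqrt hq']
  exact neg_div_rpow_three_halves_neg hc hq'

end SqrtProfit

open SqrtProfit in
theorem stmt_3_general (v α : ℝ) (hv : 0 < v ∧ v < 1 / 2)
    (f : ℝ → ℝ)
    (hf : ∀ p, f p = p * (1 + α - Real.sqrt (α ^ 2 + 1 - 2 * v + 2 * p))) :
    StrictConcaveOn ℝ (Set.Ici (0:ℝ)) f ∧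
      ∀ p : ℝ, 0 ≤ p →
        deriv (deriv f) p =
          (-2 * (α ^ 2 + 1) - 3 * p + 4 * v) /
            (α ^ 2 + 2 * p - 2 * v + 1) ^ ((3:ℝ) / 2) ∧
        deriv (deriv f) p < 0 := by
  set c := α ^ 2 + 1 - 2 * v
  have hc : 0 < c := by nlinarith [sq_nonneg α, hv.2]
  obtain rfl : f = fun q => q * (1 + α - √(c + 2 * q)) := funext hf
  have hsecond : ∀ p : ℝ, 0 ≤ p → deriv (deriv fun q => q * (1 + α - √(c + 2 * q))) p =
      (-2 * (α ^ 2 + 1) - 3 * p + 4 * v) / (α ^ 2 + 2 * p - 2 * v + 1) ^ ((3:ℝ) / 2) := by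
    intro p hp
    rw [deriv_deriv_mul_sub_sqrt (by linarith), show c + 2 * p = α ^ 2 + 2 * p - 2 * v + 1 by ring]
    congr 1
    ring
  refine ⟨(strictConcaveOn_mul_sub_sqrt hc.le).subset (Ici_subset_Ici.2 (by linarith))
    (convex_Ici 0), fun p hp => ⟨hsecond p hp, ?_⟩⟩
  rw [deriv_deriv_mul_sub_sqrt (by linarith)]
  exact neg_div_rpow_three_halves_neg hc.le (by linarith)

/-- With 0 < v < 1/2 and α ≥ 0, the function
π̂(p) = p(1 + α − √(α² + 1 − 2v + 2p)) is strictly concave on [0,∞); its second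
derivative equals (−2(α²+1) − 3p + 4v)/(α² + 2p − 2v + 1)^{3/2}, which is
negative for every p ≥ 0. -/
theorem stmt_3 (v α : ℝ) (hv : 0 < v ∧ v < 1 / 2) (hα : 0 ≤ α)
    (f : ℝ → ℝ)
    (hf : ∀ p, f p = p * (1 + α - Real.sqrt (α ^ 2 + 1 - 2 * v + 2 * p))) :
    StrictConcaveOn ℝ (Set.Ici (0:ℝ)) f ∧
      ∀ p : ℝ, 0 ≤ p →
        deriv (deriv f) p =
          (-2 * (α ^ 2 + 1) - 3 * p + 4 * v) /
            (α ^ 2 + 2 * p - 2 * v + 1) ^ ((3:ℝ) / 2) ∧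
        deriv (deriv f) p < 0 :=
  stmt_3_general v α hv f hf
end

section
/- Fix real numbers v with 0 < v < 1/2 and α with 0 ≤ α ≤ 1. Then p̂ = (1/9)[(1+α)√(2(2 − 3v + 2α² + α)) − 2(1 − 3v + α² − α)] is positive, satisfies the first-order condition dπ̂_α/dp (p̂) = 0, and is the unique global maximizer of π̂_α on [0, ∞). -/
/-- With 0 < v < 1/2, 0 ≤ α ≤ 1 and
π̂(p) = p(1 + α − √(α² + 1 − 2v + 2p)), the fee
p̂ = (1/9)[(1+α)√(2(2 − 3v + 2α² + α)) − 2(1 − 3v + α² − α)] is positive,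
satisfies the first-order condition π̂′(p̂) = 0, and is the unique global
maximizer of π̂ on [0,∞). -/
theorem stmt_4 (v α : ℝ) (hv : 0 < v ∧ v < 1 / 2) (hα : 0 ≤ α ∧ α ≤ 1)
    (f : ℝ → ℝ)
    (hf : ∀ p, f p = p * (1 + α - Real.sqrt (α ^ 2 + 1 - 2 * v + 2 * p)))
    (phat : ℝ)
    (hphat : phat = (1 / 9) * ((1 + α) * Real.sqrt (2 * (2 - 3 * v + 2 * α ^ 2 + α))
      - 2 * (1 - 3 * v + α ^ 2 - α))) :
    0 < phat ∧ deriv f phat = 0 ∧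
      ∀ p : ℝ, 0 ≤ p → p ≠ phat → f p < f phat := by
  obtain ⟨hv0, hv2⟩ := hv
  obtain ⟨hα0, hα1⟩ := hα
  set c : ℝ := α ^ 2 + 1 - 2 * v with hc_def
  set u : ℝ := 1 + α with hu_def
  have hc : 0 < c := by nlinarith [sq_nonneg α]
  have hu : 0 < u := by rw [hu_def]; linarith
  have hcu : c < u ^ 2 := by simp only [hc_def, hu_def]; nlinarith
  set d : ℝ := Real.sqrt (2 * (2 - 3 * v + 2 * α ^ 2 + α)) with hd_def
  have hd0 : 0 ≤ d := Real.sqrt_nonneg _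
  have hd2 : d ^ 2 = u ^ 2 + 3 * c := by
    rw [hd_def, Real.sq_sqrt (by nlinarith [sq_nonneg α])]
    simp only [hc_def, hu_def]; ring
  have hdu : u < d := by nlinarith
  set s : ℝ := (u + d) / 3 with hs_def
  have hs0 : 0 < s := by simp only [hs_def]; linarith
  have hcub : 3 * s ^ 2 - 2 * u * s - c = 0 := by
    have : 3 * s ^ 2 - 2 * u * s - c = (d ^ 2 - u ^ 2 - 3 * c) / 3 := by
      rw [hs_def]; ring
    rw [this, hd2]; ring
  have hd2' : d ^ 2 = 4 * α ^ 2 + 2 * α + 4 - 6 * v := by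
    rw [hd2, hu_def, hc_def]; ring
  have hph : phat = (s ^ 2 - c) / 2 := by
    rw [hphat, hs_def, hu_def, hc_def]
    linear_combination (-1 / 18) * hd2'
  have hdlt : d < 2 * u := by nlinarith
  have hsc : c < s ^ 2 := by
    have h9 : 9 * (s ^ 2 - c) = 2 * (2 * u - d) * (u + d) := by
      rw [hs_def]; linear_combination 3 * hd2
    nlinarith [h9]
  have hphat_pos : 0 < phat := by rw [hph]; linarith
  have hsq_phat : c + 2 * phat = s ^ 2 := by rw [hph]; ring
  have hsqrt_phat : Real.sqrt (c + 2 * phat) = s := by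
    rw [hsq_phat, Real.sqrt_sq hs0.le]
  clear_value c u d s
  refine ⟨hphat_pos, ?_, ?_⟩
  · -- derivative
    have h1 : HasDerivAt (fun p : ℝ => c + 2 * p) 2 phat := by
      simpa using ((hasDerivAt_id phat).const_mul 2).const_add c
    have hne0 : c + 2 * phat ≠ 0 := by rw [hsq_phat]; positivity
    have h2 : HasDerivAt (fun p : ℝ => Real.sqrt (c + 2 * p))
        (1 / (2 * Real.sqrt (c + 2 * phat)) * 2) phat :=
      (Real.hasDerivAt_sqrt hne0).comp phat h1
    have h3 : HasDerivAt f
        (1 * (u - Real.sqrt (c + 2 * phat)) +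
          phat * (0 - 1 / (2 * Real.sqrt (c + 2 * phat)) * 2)) phat := by
      have hfun : f = fun p : ℝ => p * (u - Real.sqrt (c + 2 * p)) := by
        funext p; rw [hf p]
      rw [hfun]
      exact (hasDerivAt_id phat).mul ((hasDerivAt_const phat u).sub h2)
    rw [h3.deriv, hsqrt_phat, hph]
    have hs0' : s ≠ 0 := ne_of_gt hs0
    have hval : 1 * (u - s) + (s ^ 2 - c) / 2 * (0 - 1 / (2 * s) * 2)
        = -(3 * s ^ 2 - 2 * u * s - c) / (2 * s) := by
      field_simp; ring
    rw [hval, hcub]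
    simp
  · intro p hp hne
    set t : ℝ := Real.sqrt (c + 2 * p) with ht_def
    have ht0 : 0 ≤ t := Real.sqrt_nonneg _
    have ht2 : t ^ 2 = c + 2 * p := Real.sq_sqrt (by linarith)
    have hfp : f p = p * (u - t) := by rw [hf p]
    have hfph : f phat = phat * (u - s) := by rw [hf phat, hsqrt_phat]
    have htns : t ≠ s := by
      intro h
      apply hne
      have h2 : c + 2 * p = c + 2 * phat := by
        rw [← ht2, h, ← hsq_phat]
      linarith
    have hposf : 0 < t + 2 * s - u := by
      have : 3 * (t + 2 * s - u) = 3 * t + 2 * d - u := by rw [hs_def]; ring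
      linarith [ht0, hdu, hu]
    have key : f phat - f p = 1 / 2 * (t - s) ^ 2 * (t + 2 * s - u) := by
      rw [hfp, hfph, hph]
      linear_combination ((u - t) / 2) * ht2 + ((t - s) / 2) * hcub
    have h0 : t - s ≠ 0 := sub_ne_zero.mpr htns
    have hsq : 0 < (t - s) ^ 2 := by positivity
    have hprod : 0 < 1 / 2 * (t - s) ^ 2 * (t + 2 * s - u) :=
      mul_pos (mul_pos (by norm_num) hsq) hposf
    linarith [key, hprod]
end

section
/- Fix a real number v with 0 < v < 1/2. The function F(α) = sup_{p ≥ 0} π̂_α(p) is strictly increasing in α on [0, 1]. -/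
/-- With 0 < v < 1/2, the optimal no-moderation subscription profit
F(α) = sup_{p ≥ 0} p(1 + α − √(α² + 1 − 2v + 2p)) is strictly increasing in α
on [0,1]. -/
theorem stmt_5 (v : ℝ) (hv : 0 < v ∧ v < 1 / 2)
    (F : ℝ → ℝ)
    (hF : ∀ α, F α = sSup ((fun p =>
      p * (1 + α - Real.sqrt (α ^ 2 + 1 - 2 * v + 2 * p))) '' Set.Ici (0:ℝ))) :
    StrictMonoOn F (Set.Icc (0:ℝ) 1) := by
  obtain ⟨hv0, hv2⟩ := hv
  obtain ⟨f, hfdef⟩ : ∃ f : ℝ → ℝ → ℝ,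
      f = fun α p => p * (1 + α - Real.sqrt (α ^ 2 + 1 - 2 * v + 2 * p)) := ⟨_, rfl⟩
  -- boundedness of f α on Ici 0 by 4
  have hbdd4 : ∀ α ∈ Set.Icc (0:ℝ) 1, ∀ p ∈ Set.Ici (0:ℝ), f α p ≤ 4 := by
    intro α hα p hp
    simp only [Set.mem_Ici] at hp
    rcases le_or_gt p 2 with h2 | h2
    · have hsq : 0 ≤ Real.sqrt (α ^ 2 + 1 - 2 * v + 2 * p) := Real.sqrt_nonneg _
      simp only [hfdef]
      nlinarith [hα.1, hα.2]
    · have h4 : (2:ℝ) ≤ Real.sqrt (α ^ 2 + 1 - 2 * v + 2 * p) := by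
        rw [Real.le_sqrt' (by norm_num)]
        nlinarith [sq_nonneg α]
      simp only [hfdef]
      nlinarith [hα.2]
  have hBdd : ∀ α ∈ Set.Icc (0:ℝ) 1, BddAbove (f α '' Set.Ici (0:ℝ)) := by
    intro α hα
    exact ⟨4, by rintro x ⟨p, hp, rfl⟩; exact hbdd4 α hα p hp⟩
  have hmem : ∀ α : ℝ, ∀ p : ℝ, 0 ≤ p → f α p ∈ f α '' Set.Ici (0:ℝ) := by
    intro α p hp; exact ⟨p, hp, rfl⟩
  have hset : ∀ α : ℝ, ((fun p =>
      p * (1 + α - Real.sqrt (α ^ 2 + 1 - 2 * v + 2 * p))) '' Set.Ici (0:ℝ))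
      = f α '' Set.Ici (0:ℝ) := by
    intro α; rw [hfdef]
  -- pointwise gap inequality
  intro α₁ hα₁ α₂ hα₂ h12
  have hc : 0 < 1 - 2 * v := by linarith
  obtain ⟨D, hDdef⟩ : ∃ D:ℝ, D = Real.sqrt (α₁ ^ 2 + 1 - 2 * v) + Real.sqrt (α₂ ^ 2 + 1 - 2 * v) := ⟨_, rfl⟩
  have hC1 : 0 < α₁ ^ 2 + 1 - 2 * v := by nlinarith [sq_nonneg α₁]
  have hC2 : 0 < α₂ ^ 2 + 1 - 2 * v := by nlinarith [sq_nonneg α₂]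
  have hD0 : 0 < D := by
    have := Real.sqrt_pos.mpr hC1
    have := Real.sqrt_nonneg (α₂ ^ 2 + 1 - 2 * v)
    rw [hDdef]; linarith
  have hsum_lt : α₁ + α₂ < D := by
    have h1 : α₁ < Real.sqrt (α₁ ^ 2 + 1 - 2 * v) := by
      rw [Real.lt_sqrt hα₁.1]; linarith
    have h2 : α₂ < Real.sqrt (α₂ ^ 2 + 1 - 2 * v) := by
      rw [Real.lt_sqrt (le_trans hα₁.1 h12.le)]; linarith
    rw [hDdef]; linarith
  obtain ⟨δ, hδdef⟩ : ∃ d:ℝ, d = 1 - (α₁ + α₂) / D := ⟨_, rfl⟩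
  have hδ0 : 0 < δ := by
    have : (α₁ + α₂) / D < 1 := (div_lt_one hD0).mpr hsum_lt
    rw [hδdef]; linarith
  have hgap : ∀ p : ℝ, 0 ≤ p → f α₁ p + p * (α₂ - α₁) * δ ≤ f α₂ p := by
    intro p hp
    obtain ⟨A₁, hA1def⟩ : ∃ a:ℝ, a = α₁ ^ 2 + 1 - 2 * v + 2 * p := ⟨_, rfl⟩
    obtain ⟨A₂, hA2def⟩ : ∃ a:ℝ, a = α₂ ^ 2 + 1 - 2 * v + 2 * p := ⟨_, rfl⟩
    have hA1 : 0 < A₁ := by rw [hA1def]; linarith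
    have hA2 : 0 < A₂ := by rw [hA2def]; linarith
    have hs1 := Real.sq_sqrt hA1.le
    have hs2 := Real.sq_sqrt hA2.le
    have hsum0 : 0 < Real.sqrt A₂ + Real.sqrt A₁ := by
      have := Real.sqrt_pos.mpr hA2
      have := Real.sqrt_nonneg A₁
      linarith
    have hid : Real.sqrt A₂ - Real.sqrt A₁ = (A₂ - A₁) / (Real.sqrt A₂ + Real.sqrt A₁) := by
      rw [eq_div_iff (ne_of_gt hsum0)]
      nlinarith [hs1, hs2]
    have hDle : D ≤ Real.sqrt A₂ + Real.sqrt A₁ := by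
      have h1 : Real.sqrt (α₁ ^ 2 + 1 - 2 * v) ≤ Real.sqrt A₁ :=
        Real.sqrt_le_sqrt (by rw [hA1def]; linarith)
      have h2 : Real.sqrt (α₂ ^ 2 + 1 - 2 * v) ≤ Real.sqrt A₂ :=
        Real.sqrt_le_sqrt (by rw [hA2def]; linarith)
      rw [hDdef]; linarith
    have hAA : A₂ - A₁ = (α₂ - α₁) * (α₂ + α₁) := by rw [hA1def, hA2def]; ring
    have hnum : 0 ≤ A₂ - A₁ := by
      rw [hAA]
      have : 0 ≤ α₂ + α₁ := by have := hα₁.1; linarith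
      nlinarith
    have hkey : Real.sqrt A₂ - Real.sqrt A₁ ≤ (α₂ - α₁) * ((α₁ + α₂) / D) := by
      rw [hid]
      calc (A₂ - A₁) / (Real.sqrt A₂ + Real.sqrt A₁) ≤ (A₂ - A₁) / D :=
            div_le_div_of_nonneg_left hnum hD0 hDle
        _ = (α₂ - α₁) * ((α₁ + α₂) / D) := by rw [hAA]; ring
    have expand : f α₂ p - f α₁ p
        = p * ((α₂ - α₁) - (Real.sqrt A₂ - Real.sqrt A₁)) := by
      rw [hfdef, hA1def, hA2def]; ring
    have : p * (α₂ - α₁) * δ ≤ p * ((α₂ - α₁) - (Real.sqrt A₂ - Real.sqrt A₁)) := by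
      have h1 : (α₂ - α₁) * δ ≤ (α₂ - α₁) - (Real.sqrt A₂ - Real.sqrt A₁) := by
        have heq : (α₂ - α₁) * δ = (α₂ - α₁) - (α₂ - α₁) * ((α₁ + α₂) / D) := by
          rw [hδdef]; ring
        linarith [hkey]
      have h2 := mul_le_mul_of_nonneg_left h1 hp
      linarith [h2, (by ring : p * (α₂ - α₁) * δ = p * ((α₂ - α₁) * δ))]
    linarith [expand ▸ this]
  -- non-strict monotonicity of F
  have hFle : F α₁ ≤ F α₂ := by
    rw [hF α₁, hF α₂, hset α₁, hset α₂]
    apply csSup_le ⟨f α₁ 0, hmem α₁ 0 le_rfl⟩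
    rintro x ⟨p, hp, rfl⟩
    simp only [Set.mem_Ici] at hp
    have h1 := hgap p hp
    have h2 : f α₂ p ≤ sSup (f α₂ '' Set.Ici (0:ℝ)) :=
      le_csSup (hBdd α₂ hα₂) (hmem α₂ p hp)
    have hδn : 0 ≤ p * (α₂ - α₁) * δ := by
      have : 0 ≤ α₂ - α₁ := by linarith
      positivity
    linarith
  -- F α₁ > 0
  have hF1pos : 0 < F α₁ := by
    have hpv : (0:ℝ) ≤ v / 2 := by linarith
    have hlt : Real.sqrt (α₁ ^ 2 + 1 - 2 * v + 2 * (v / 2)) < 1 + α₁ := by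
      rw [Real.sqrt_lt' (by linarith [hα₁.1])]
      nlinarith [hα₁.1]
    have hfpos : 0 < f α₁ (v / 2) := by
      simp only [hfdef]
      have : 0 < v / 2 := by linarith
      nlinarith
    have := le_csSup (hBdd α₁ hα₁) (hmem α₁ (v / 2) hpv)
    rw [hF α₁, hset α₁]; linarith
  -- strict inequality
  obtain ⟨κ, hκdef⟩ : ∃ k:ℝ, k = (F α₁ / 4) * (α₂ - α₁) * δ := ⟨_, rfl⟩
  have hκ0 : 0 < κ := by
    have h1 : 0 < α₂ - α₁ := by linarith
    rw [hκdef]; positivity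
  obtain ⟨m, hmdef⟩ : ∃ m:ℝ, m = min κ (F α₁ / 2) := ⟨_, rfl⟩
  have hm0 : 0 < m := by rw [hmdef]; exact lt_min hκ0 (by linarith)
  have hub : ∀ x ∈ f α₁ '' Set.Ici (0:ℝ), x ≤ F α₂ - m := by
    rintro x ⟨p, hp, rfl⟩
    simp only [Set.mem_Ici] at hp
    rcases le_or_gt (f α₁ p) (F α₁ / 2) with hcase | hcase
    · have : m ≤ F α₁ / 2 := by rw [hmdef]; exact min_le_right _ _
      linarith
    · -- then p > F α₁ / 4
      have hfle : f α₁ p ≤ 2 * p := by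
        have hsq : 0 ≤ Real.sqrt (α₁ ^ 2 + 1 - 2 * v + 2 * p) := Real.sqrt_nonneg _
        simp only [hfdef]
        nlinarith [hα₁.2]
      have hpbig : F α₁ / 4 < p := by linarith
      have h1 := hgap p hp
      have h2 : f α₂ p ≤ F α₂ := by
        rw [hF α₂, hset α₂]; exact le_csSup (hBdd α₂ hα₂) (hmem α₂ p hp)
      have h3 : κ ≤ p * (α₂ - α₁) * δ := by
        have h4 : 0 < α₂ - α₁ := by linarith
        rw [hκdef]
        have h5 : 0 < (α₂ - α₁) * δ := by positivity
        have h6 := mul_le_mul_of_nonneg_right hpbig.le h5.le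
        linarith [h6, (by ring : F α₁ / 4 * ((α₂ - α₁) * δ) = F α₁ / 4 * (α₂ - α₁) * δ),
          (by ring : p * ((α₂ - α₁) * δ) = p * (α₂ - α₁) * δ)]
      have : m ≤ κ := by rw [hmdef]; exact min_le_left _ _
      linarith
  have : F α₁ ≤ F α₂ - m := by
    rw [hF α₁, hset α₁]
    exact csSup_le ⟨f α₁ 0, hmem α₁ 0 le_rfl⟩ hub
  linarith
end

section
/- Fix a real number v with 0 < v < 1/2 and let F(α) = sup_{p ≥ 0} π̂_α(p). There exists α^S ∈ (0, √(2v)) such that F(α) < (2v/3)^{3/2} for all α ∈ [0, α^S) and F(α) > (2v/3)^{3/2} for all α ∈ (α^S, √(2v)]. -/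
/-- Closed form of the optimal unmoderated profit. -/
noncomputable def Gv (v α : ℝ) : ℝ :=
  (((1 + α + Real.sqrt ((1+α)^2 + 3*(α^2+1-2*v)))/3)^2 - (α^2+1-2*v)) *
    (1 + α - (1 + α + Real.sqrt ((1+α)^2 + 3*(α^2+1-2*v)))/3) / 2

lemma Gv_upper (v α : ℝ) (hv1 : v < 1/2) (hα : 0 ≤ α) :
    ∀ p ∈ Set.Ici (0:ℝ),
      p * (1 + α - Real.sqrt (α ^ 2 + 1 - 2 * v + 2 * p)) ≤ Gv v α := by
  intro p hp
  simp only [Set.mem_Ici] at hp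
  have hc0 : 0 < α^2 + 1 - 2*v := by nlinarith [sq_nonneg α]
  set c := α^2 + 1 - 2*v with hc
  set D := Real.sqrt ((1+α)^2 + 3*c) with hD
  have hD0 : 0 ≤ D := Real.sqrt_nonneg _
  have hD2 : D^2 = (1+α)^2 + 3*c := Real.sq_sqrt (by nlinarith [sq_nonneg (1+α)])
  set σ := Real.sqrt (c + 2*p) with hσ
  have hσ0 : 0 ≤ σ := Real.sqrt_nonneg _
  have hσ2 : σ^2 = c + 2*p := Real.sq_sqrt (by linarith)
  have hDA : 1 + α < D := by nlinarith
  have hs3 : 3*((1+α+D)/3)^2 = 2*(1+α)*((1+α+D)/3) + c := by linear_combination hD2/3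
  set s := (1+α+D)/3 with hs
  have hp' : p = (σ^2 - c)/2 := by linarith
  have key : 0 ≤ (σ - s)^2 * (σ + 2*s - (1+α)) :=
    mul_nonneg (sq_nonneg _) (by rw [hs]; linarith)
  have hid : (s^2-c)*((1+α)-s)/2 - (σ^2-c)/2*((1+α)-σ)
      = (σ-s)^2*(σ+2*s-(1+α))/2 := by linear_combination ((σ-s)/2) * hs3
  have hgoal : p * (1 + α - σ) ≤ (s^2-c)*((1+α)-s)/2 := by
    rw [hp']; linarith
  calc p * (1 + α - σ) ≤ (s^2-c)*((1+α)-s)/2 := hgoal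
    _ = Gv v α := by rw [Gv]

lemma Gv_mem (v α : ℝ) (hv0 : 0 < v) (hv1 : v < 1/2) (hα : 0 ≤ α) :
    ∃ p > 0, p * (1 + α - Real.sqrt (α ^ 2 + 1 - 2 * v + 2 * p)) = Gv v α := by
  have hc0 : 0 < α^2 + 1 - 2*v := by nlinarith [sq_nonneg α]
  set c := α^2 + 1 - 2*v with hc
  set D := Real.sqrt ((1+α)^2 + 3*c) with hD
  have hD0 : 0 ≤ D := Real.sqrt_nonneg _
  have hD2 : D^2 = (1+α)^2 + 3*c := Real.sq_sqrt (by nlinarith [sq_nonneg (1+α)])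
  have hDA : 1 + α < D := by nlinarith
  have hD2A : D < 2*(1+α) := by nlinarith
  set s := (1+α+D)/3 with hs
  have hs0 : 0 ≤ s := by rw [hs]; linarith
  have hs3 : 3*s^2 = 2*(1+α)*s + c := by rw [hs]; linear_combination hD2/3
  refine ⟨(s^2 - c)/2, ?_, ?_⟩
  · -- s^2 - c = (2/3)((1+α)s - c) > 0 since (2(1+α)-D)(1+α+D) > 0
    nlinarith [mul_pos (show (0:ℝ) < 2*(1+α) - D by linarith)
      (show (0:ℝ) < 1 + α + D by linarith)]
  · have harg : c + 2*((s^2 - c)/2) = s^2 := by ring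
    rw [harg, Real.sqrt_sq hs0, Gv]
    ring

lemma Gv_cont (v : ℝ) : Continuous (Gv v) := by
  unfold Gv; fun_prop

lemma sqrt_gap (K a₁ a₂ : ℝ) (hK : 0 < K) (h1 : 0 ≤ a₁) (h12 : a₁ < a₂) :
    Real.sqrt (a₂^2 + K) < a₂ - a₁ + Real.sqrt (a₁^2 + K) := by
  have hs1 : (Real.sqrt (a₁^2 + K))^2 = a₁^2 + K :=
    Real.sq_sqrt (by positivity)
  have hs2 : (Real.sqrt (a₂^2 + K))^2 = a₂^2 + K :=
    Real.sq_sqrt (by positivity)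
  have hs1' : a₁ < Real.sqrt (a₁^2 + K) := by
    rw [show a₁^2 + K = a₁^2 + K from rfl]
    nlinarith [Real.sqrt_nonneg (a₁^2 + K)]
  have hs20 : 0 ≤ Real.sqrt (a₂^2 + K) := Real.sqrt_nonneg _
  nlinarith [Real.sqrt_nonneg (a₁^2 + K)]

lemma Gv_strictMonoOn (v : ℝ) (hv0 : 0 < v) (hv1 : v < 1/2) :
    StrictMonoOn (Gv v) (Set.Ici (0:ℝ)) := by
  intro a₁ h1 a₂ h2 h12
  simp only [Set.mem_Ici] at h1 h2
  obtain ⟨p, hp0, hpe⟩ := Gv_mem v a₁ hv0 hv1 h1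
  have step : p * (1 + a₁ - Real.sqrt (a₁ ^ 2 + 1 - 2 * v + 2 * p))
      < p * (1 + a₂ - Real.sqrt (a₂ ^ 2 + 1 - 2 * v + 2 * p)) := by
    have hK : 0 < 1 - 2*v + 2*p := by linarith
    have := sqrt_gap (1 - 2*v + 2*p) a₁ a₂ hK h1 h12
    have e1 : a₁ ^ 2 + 1 - 2 * v + 2 * p = a₁^2 + (1 - 2*v + 2*p) := by ring
    have e2 : a₂ ^ 2 + 1 - 2 * v + 2 * p = a₂^2 + (1 - 2*v + 2*p) := by ring
    rw [e1, e2]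
    apply mul_lt_mul_of_pos_left _ hp0
    linarith
  calc Gv v a₁ = p * (1 + a₁ - Real.sqrt (a₁ ^ 2 + 1 - 2 * v + 2 * p)) := hpe.symm
    _ < p * (1 + a₂ - Real.sqrt (a₂ ^ 2 + 1 - 2 * v + 2 * p)) := step
    _ ≤ Gv v a₂ := Gv_upper v a₂ hv1 h2 p (Set.mem_Ici.mpr hp0.le)

lemma Gv_zero_lt (v : ℝ) (hv0 : 0 < v) (hv1 : v < 1/2) :
    Gv v 0 < (2 * v / 3) * Real.sqrt (2 * v / 3) := by
  have harg : (1+(0:ℝ))^2 + 3*((0:ℝ)^2+1-2*v) = 4 - 6*v := by ring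
  rw [Gv, harg]
  set a := Real.sqrt (4 - 6*v) with ha
  have ha2 : a^2 = 4 - 6*v := Real.sq_sqrt (by linarith)
  have ha0 : 0 ≤ a := Real.sqrt_nonneg _
  have ha1 : 1 < a := by nlinarith
  have ha4 : a < 2 := by nlinarith
  set w := Real.sqrt (2*v/3) with hw
  have hw2 : w^2 = 2*v/3 := Real.sq_sqrt (by linarith)
  have hw0 : 0 < w := Real.sqrt_pos.mpr (by linarith)
  have hsq : ((2-a)*(1+a))^2 < (3*w*(2+a))^2 := by nlinarith
  have key : (2-a)*(1+a) < 3*w*(2+a) :=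
    lt_of_pow_lt_pow_left₀ 2 (by positivity) hsq
  have hmul : (2-a)*((2-a)*(1+a)) < (2-a)*(3*w*(2+a)) :=
    mul_lt_mul_of_pos_left key (by linarith)
  have hform : (((1+(0:ℝ)+a)/3)^2 - ((0:ℝ)^2+1-2*v)) * (1+(0:ℝ) - (1+(0:ℝ)+a)/3)/2
      = (2-a)^2*(1+a)/27 := by linear_combination ((2-a)/18) * ha2
  rw [hform, show 2*v/3 = (4-a^2)/9 by linarith]
  nlinarith [hmul]

lemma Gv_sqrt_gt (v : ℝ) (hv0 : 0 < v) (hv1 : v < 1/2) :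
    (2 * v / 3) * Real.sqrt (2 * v / 3) < Gv v (Real.sqrt (2*v)) := by
  have htb0 : Real.sqrt (2*v) = Real.sqrt 3 * Real.sqrt (2*v/3) := by
    rw [← Real.sqrt_mul (by norm_num : (0:ℝ) ≤ 3), show (3:ℝ)*(2*v/3) = 2*v by ring]
  set b := Real.sqrt (2*v) with hb
  have hb2 : b^2 = 2*v := Real.sq_sqrt (by linarith)
  have hb0 : 0 < b := Real.sqrt_pos.mpr (by linarith)
  have hb1 : b < 1 := by nlinarith
  have hc : b^2 + 1 - 2*v = 1 := by linarith
  have harg : (1+b)^2 + 3*(b^2+1-2*v) = (1+b)^2 + 3 := by rw [hc]; ring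
  rw [Gv, harg, hc]
  set D := Real.sqrt ((1+b)^2 + 3) with hD
  have hD0 : 0 ≤ D := Real.sqrt_nonneg _
  have hD2 : D^2 = (1+b)^2 + 3 := Real.sq_sqrt (by positivity)
  set w := Real.sqrt (2*v/3) with hw
  have hw2 : w^2 = 2*v/3 := Real.sq_sqrt (by linarith)
  have hw0 : 0 < w := Real.sqrt_pos.mpr (by linarith)
  set t := Real.sqrt 3 with ht
  have ht2 : t^2 = 3 := Real.sq_sqrt (by norm_num)
  have ht0 : 0 < t := Real.sqrt_pos.mpr (by norm_num)
  have htb : b = t * w := htb0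
  have ht1 : t < 2 := by nlinarith
  have hcube : 3*(1+b)^2 + 5 ≤ D*((1+b)^2+3) := by
    nlinarith [sq_nonneg ((1+b)^2 - 1), mul_pos hb0 hb0,
      mul_nonneg hD0 (show (0:ℝ) ≤ (1+b)^2+3 by positivity), sq_nonneg (b*(b+2))]
  have hb6 : 3*t*b < b + 6 := by nlinarith [mul_lt_mul_of_pos_right ht1 hb0]
  have hmain : 3*t*b^3 < b^2*(b+6) := by
    nlinarith [mul_lt_mul_of_pos_left hb6 (mul_pos hb0 hb0)]
  have h27 : 3*t*b^3 = 27*((2*v/3) * w) := by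
    rw [htb, show 2*v/3 = w^2 from hw2.symm]
    linear_combination (3*w^3*(t^2+3))*ht2
  have hform : (((1+b+D)/3)^2 - 1) * (1+b - (1+b+D)/3)/2
      = ((1+b)^3 - 9*(1+b) + D*((1+b)^2+3))/27 := by
    linear_combination ((2*(1+b) - D)/54 - (1+b)/27) * hD2
  rw [hform]
  nlinarith [hcube, hmain, h27]

/-- With 0 < v < 1/2 and F(α) = sup_{p ≥ 0} p(1+α−√(α²+1−2v+2p)),
there exists α^S ∈ (0, √(2v)) such that F(α) < (2v/3)^{3/2} for all
α ∈ [0, α^S) and F(α) > (2v/3)^{3/2} for all α ∈ (α^S, √(2v)]. -/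
theorem stmt_8 (v : ℝ) (hv : 0 < v ∧ v < 1 / 2)
    (F : ℝ → ℝ)
    (hF : ∀ α, F α = sSup ((fun p =>
      p * (1 + α - Real.sqrt (α ^ 2 + 1 - 2 * v + 2 * p))) '' Set.Ici (0:ℝ))) :
    ∃ αS ∈ Set.Ioo (0:ℝ) (Real.sqrt (2 * v)),
      (∀ α ∈ Set.Ico (0:ℝ) αS, F α < (2 * v / 3) * Real.sqrt (2 * v / 3)) ∧
      (∀ α ∈ Set.Ioc αS (Real.sqrt (2 * v)),
        (2 * v / 3) * Real.sqrt (2 * v / 3) < F α) := by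
  obtain ⟨hv0, hv1⟩ := hv
  -- F coincides with Gv on [0,∞)
  have hFG : ∀ α, 0 ≤ α → F α = Gv v α := by
    intro α hα
    rw [hF α]
    apply IsGreatest.csSup_eq
    constructor
    · obtain ⟨p, hp0, hpe⟩ := Gv_mem v α hv0 hv1 hα
      exact ⟨p, Set.mem_Ici.mpr hp0.le, hpe⟩
    · rintro x ⟨p, hp, rfl⟩
      exact Gv_upper v α hv1 hα p hp
  have hA0 : 0 < Real.sqrt (2*v) := Real.sqrt_pos.mpr (by linarith)
  -- IVT for Gv
  have hivt := intermediate_value_Ioo (le_of_lt hA0) (Gv_cont v).continuousOn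
  have hmem : (2 * v / 3) * Real.sqrt (2 * v / 3)
      ∈ Set.Ioo (Gv v 0) (Gv v (Real.sqrt (2*v))) :=
    ⟨Gv_zero_lt v hv0 hv1, Gv_sqrt_gt v hv0 hv1⟩
  obtain ⟨αS, hαS, hGeq⟩ := hivt hmem
  refine ⟨αS, hαS, ?_, ?_⟩
  · intro α hα
    obtain ⟨hα0, hαlt⟩ := hα
    have := Gv_strictMonoOn v hv0 hv1 (Set.mem_Ici.mpr hα0)
      (Set.mem_Ici.mpr hαS.1.le) hαlt
    rw [hFG α hα0, ← hGeq]
    exact this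
  · intro α hα
    obtain ⟨hαgt, hαle⟩ := hα
    have hα0 : 0 ≤ α := le_trans hαS.1.le hαgt.le
    have := Gv_strictMonoOn v hv0 hv1 (Set.mem_Ici.mpr hαS.1.le)
      (Set.mem_Ici.mpr hα0) hαgt
    rw [hFG α hα0, ← hGeq]
    exact this
end

section
/- Fix a real number v with 0 < v < 1/2 and define ζ̂(α) = (sup_{p ≥ 0} π̂_α(p)) / (1 + α − √(α² + 1 − 2v)) for α ∈ [0,1]. Then ζ̂ is strictly increasing on [0,1]. -/
open Real Set

noncomputable def st11u (v α : ℝ) : ℝ := Real.sqrt (α ^ 2 + 1 - 2 * v)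
noncomputable def st11D (v α : ℝ) : ℝ := 1 + α - st11u v α
/-- value of the profit function at the point parametrized by `t ∈ [0,1]` -/
noncomputable def st11g (v α t : ℝ) : ℝ :=
  t * (1 - t) * st11D v α ^ 2 * (2 * st11u v α + t * st11D v α) / 2
noncomputable def st11h (v α t : ℝ) : ℝ :=
  t * (1 - t) * st11D v α * (2 * st11u v α + t * st11D v α) / 2
/-- the fee corresponding to parameter `t` -/
noncomputable def st11p (v α t : ℝ) : ℝ :=
  t * st11D v α * (2 * st11u v α + t * st11D v α) / 2

lemma st11c_pos (v α : ℝ) (hv : 0 < v ∧ v < 1/2) : 0 < α ^ 2 + 1 - 2 * v := by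
  nlinarith [sq_nonneg α]

lemma st11u_sq (v α : ℝ) (hv : 0 < v ∧ v < 1/2) : st11u v α ^ 2 = α ^ 2 + 1 - 2 * v :=
  Real.sq_sqrt (st11c_pos v α hv).le

lemma st11u_pos (v α : ℝ) (hv : 0 < v ∧ v < 1/2) : 0 < st11u v α :=
  Real.sqrt_pos.mpr (st11c_pos v α hv)

lemma st11u_gt (v α : ℝ) (hv : 0 < v ∧ v < 1/2) (hα : 0 ≤ α) : α < st11u v α := by
  rw [st11u]
  exact (Real.lt_sqrt hα).mpr (by nlinarith)

lemma st11u_lt (v α : ℝ) (hv : 0 < v ∧ v < 1/2) (hα : 0 ≤ α) : st11u v α < 1 + α := by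
  rw [st11u]
  apply (Real.sqrt_lt' (by linarith)).mpr
  nlinarith

lemma st11D_pos (v α : ℝ) (hv : 0 < v ∧ v < 1/2) (hα : 0 ≤ α) : 0 < st11D v α := by
  have := st11u_lt v α hv hα; rw [st11D]; linarith

lemma st11u_mono (v α β : ℝ) (hα : 0 ≤ α) (hαβ : α ≤ β) : st11u v α ≤ st11u v β := by
  apply Real.sqrt_le_sqrt; nlinarith

lemma st11D_strict (v α β : ℝ) (hv : 0 < v ∧ v < 1/2) (hα : 0 ≤ α) (hαβ : α < β) :
    st11D v α < st11D v β := by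
  have ha := st11u_gt v α hv hα
  have hb := st11u_gt v β hv (by linarith)
  have hsa := st11u_sq v α hv
  have hsb := st11u_sq v β hv
  have hm := st11u_mono v α β hα hαβ.le
  rw [st11D, st11D]
  nlinarith

lemma st11p_nonneg (v α t : ℝ) (hv : 0 < v ∧ v < 1/2) (hα : 0 ≤ α) (ht : t ∈ Icc (0:ℝ) 1) :
    0 ≤ st11p v α t := by
  have hD := st11D_pos v α hv hα
  have hu := st11u_pos v α hv
  rw [st11p]
  have h1 : 0 ≤ 2 * st11u v α + t * st11D v α := by nlinarith [ht.1]
  have h2 : 0 ≤ t * st11D v α := by nlinarith [ht.1]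
  nlinarith

lemma st11_sqrt_eq (v α t : ℝ) (hv : 0 < v ∧ v < 1/2) (hα : 0 ≤ α) (ht : t ∈ Icc (0:ℝ) 1) :
    Real.sqrt (α ^ 2 + 1 - 2 * v + 2 * st11p v α t) = st11u v α + t * st11D v α := by
  have hD := st11D_pos v α hv hα
  have hu := st11u_pos v α hv
  have harg : α ^ 2 + 1 - 2 * v + 2 * st11p v α t = (st11u v α + t * st11D v α) ^ 2 := by
    have := st11u_sq v α hv
    rw [st11p]; nlinarith
  rw [harg, Real.sqrt_sq (by nlinarith [ht.1])]

lemma st11_val_eq (v α t : ℝ) (hv : 0 < v ∧ v < 1/2) (hα : 0 ≤ α) (ht : t ∈ Icc (0:ℝ) 1) :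
    st11p v α t * (1 + α - Real.sqrt (α ^ 2 + 1 - 2 * v + 2 * st11p v α t)) = st11g v α t := by
  rw [st11_sqrt_eq v α t hv hα ht]
  have : 1 + α - (st11u v α + t * st11D v α) = (1 - t) * st11D v α := by rw [st11D]; ring
  rw [this, st11p, st11g]; ring

lemma st11_key (v α : ℝ) (hv : 0 < v ∧ v < 1/2) (hα : 0 ≤ α) :
    ∃ t ∈ Icc (0:ℝ) 1,
      IsGreatest ((fun p => p * (1 + α - Real.sqrt (α ^ 2 + 1 - 2 * v + 2 * p))) '' Ici 0)
        (st11g v α t) ∧ ∀ s ∈ Icc (0:ℝ) 1, st11g v α s ≤ st11g v α t := by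
  have hD := st11D_pos v α hv hα
  have hu := st11u_pos v α hv
  have hc := st11c_pos v α hv
  have hcomp : IsCompact (Icc (0:ℝ) 1) := isCompact_Icc
  obtain ⟨t, ht, hmax⟩ := hcomp.exists_isMaxOn ⟨0, by norm_num⟩
    (Continuous.continuousOn (f := st11g v α) (by unfold st11g; fun_prop))
  have hmax' : ∀ s ∈ Icc (0:ℝ) 1, st11g v α s ≤ st11g v α t := fun s hs => hmax hs
  refine ⟨t, ht, ⟨⟨st11p v α t, st11p_nonneg v α t hv hα ht, st11_val_eq v α t hv hα ht⟩, ?_⟩,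
    hmax'⟩
  rintro x ⟨p, hp, rfl⟩
  simp only [mem_Ici] at hp
  dsimp only
  set w := Real.sqrt (α ^ 2 + 1 - 2 * v + 2 * p) with hw
  have hg0 : (0:ℝ) ≤ st11g v α t := by
    have := hmax' 0 (by norm_num)
    simpa [st11g] using this
  by_cases hwa : 1 + α ≤ w
  · have : p * (1 + α - w) ≤ 0 := mul_nonpos_of_nonneg_of_nonpos hp (by linarith)
    linarith
  · push_neg at hwa
    have hwu : st11u v α ≤ w := Real.sqrt_le_sqrt (by linarith)
    set t' := (w - st11u v α) / st11D v α with ht'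
    have ht'mem : t' ∈ Icc (0:ℝ) 1 := by
      constructor
      · exact div_nonneg (by linarith) hD.le
      · rw [div_le_one hD, st11D]; linarith
    have htD : t' * st11D v α = w - st11u v α := by
      rw [ht', div_mul_cancel₀ _ hD.ne']
    have hweq : w = st11u v α + t' * st11D v α := by rw [htD]; ring
    have hwsq : w ^ 2 = α ^ 2 + 1 - 2 * v + 2 * p := Real.sq_sqrt (by linarith)
    have hpeq : p = st11p v α t' := by
      have h2 : (st11u v α + t' * st11D v α) ^ 2 = α ^ 2 + 1 - 2 * v + 2 * st11p v α t' := by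
        have := st11u_sq v α hv
        rw [st11p]; nlinarith
      rw [hweq] at hwsq
      linarith [hwsq, h2]
    have : p * (1 + α - w) = st11g v α t' := by
      rw [hw, hpeq]
      exact st11_val_eq v α t' hv hα ht'mem
    rw [this]
    exact hmax' t' ht'mem

lemma st11g_eq_h (v α t : ℝ) : st11g v α t = st11h v α t * st11D v α := by
  rw [st11g, st11h]; ring

/-- With 0 < v < 1/2 and
ζ̂(α) = (sup_{p ≥ 0} p(1+α−√(α²+1−2v+2p))) / (1 + α − √(α² + 1 − 2v)),
ζ̂ is strictly increasing on [0,1]. -/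
theorem stmt_11 (v : ℝ) (hv : 0 < v ∧ v < 1 / 2)
    (ζ : ℝ → ℝ)
    (hζ : ∀ α, ζ α = (sSup ((fun p =>
        p * (1 + α - Real.sqrt (α ^ 2 + 1 - 2 * v + 2 * p))) '' Set.Ici (0:ℝ)))
      / (1 + α - Real.sqrt (α ^ 2 + 1 - 2 * v))) :
    StrictMonoOn ζ (Set.Icc (0:ℝ) 1) := by
  intro α hα β hβ hαβ
  have hα0 : 0 ≤ α := hα.1
  have hβ0 : 0 ≤ β := hβ.1
  have hDa := st11D_pos v α hv hα0
  have hDb := st11D_pos v β hv hβ0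
  have hua := st11u_pos v α hv
  have hub := st11u_pos v β hv
  obtain ⟨s, hs, hGa, hUa⟩ := st11_key v α hv hα0
  obtain ⟨r, hr, hGb, hUb⟩ := st11_key v β hv hβ0
  have hζa : ζ α = st11h v α s := by
    rw [hζ, hGa.csSup_eq, st11g_eq_h,
      show (1 + α - Real.sqrt (α ^ 2 + 1 - 2 * v)) = st11D v α from rfl,
      mul_div_cancel_right₀ _ hDa.ne']
  have hζb : ζ β = st11h v β r := by
    rw [hζ, hGb.csSup_eq, st11g_eq_h,
      show (1 + β - Real.sqrt (β ^ 2 + 1 - 2 * v)) = st11D v β from rfl,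
      mul_div_cancel_right₀ _ hDb.ne']
  -- the max at α is positive, so s(1-s) > 0
  have hhalf : 0 < st11g v α (1/2) := by
    rw [st11g]
    have : 0 < 2 * st11u v α + (1/2) * st11D v α := by nlinarith
    positivity
  have hgs : 0 < st11g v α s := lt_of_lt_of_le hhalf (hUa (1/2) (by norm_num))
  have hss : 0 < s * (1 - s) := by
    by_contra h
    push_neg at h
    have h1 : 0 ≤ 2 * st11u v α + s * st11D v α := by nlinarith [hs.1]
    rw [st11g] at hgs
    nlinarith [mul_nonneg (sq_nonneg (st11D v α)) h1]
  have hDab := st11D_strict v α β hv hα0 hαβ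
  have humab := st11u_mono v α β hα0 hαβ.le
  have hspos : 0 < s := by nlinarith
  -- pointwise strict monotonicity at s
  have hstep : st11h v α s < st11h v β s := by
    rw [st11h, st11h]
    have hX : 2 * st11u v α + s * st11D v α < 2 * st11u v β + s * st11D v β := by nlinarith
    have hXa : 0 < 2 * st11u v α + s * st11D v α := by nlinarith
    have : st11D v α * (2 * st11u v α + s * st11D v α)
        < st11D v β * (2 * st11u v β + s * st11D v β) := by nlinarith
    nlinarith
  -- h β s ≤ h β r
  have hlast : st11h v β s ≤ st11h v β r := by
    have hg : st11g v β s ≤ st11g v β r := hUb s hs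
    rw [st11g_eq_h, st11g_eq_h] at hg
    exact le_of_mul_le_mul_right hg hDb
  rw [hζa, hζb]
  linarith
end

section
/- Fix a real number v with 0 < v < 1/2 and define ζ̂(α) = (sup_{p ≥ 0} π̂_α(p)) / (1 + α − √(α² + 1 − 2v)) for α ∈ [0,1]. There exists α₁ ∈ (0, √(2v)) such that ζ̂(α) < 2v/(3√3) for all α ∈ [0, α₁) and ζ̂(α) > 2v/(3√3) for all α ∈ (α₁, 1]. -/
noncomputable def Mfun (v α : ℝ) : ℝ :=
  (2*(1+α) - Real.sqrt ((1+α)^2 + 3*(α^2+1-2*v)))^2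
    * ((1+α) + Real.sqrt ((1+α)^2 + 3*(α^2+1-2*v))) / 27

lemma sup_isGreatest (v α : ℝ) (hv0 : 0 < v) (hv1 : v < 1/2) (hα : 0 ≤ α) :
    IsGreatest ((fun p => p * (1 + α - Real.sqrt (α ^ 2 + 1 - 2 * v + 2 * p))) '' Set.Ici (0:ℝ))
      (Mfun v α) := by
  have ha : (0:ℝ) < 1 + α := by linarith
  have hc : (0:ℝ) < α ^ 2 + 1 - 2 * v := by nlinarith
  have hca : α ^ 2 + 1 - 2 * v < (1 + α) ^ 2 := by nlinarith
  set a := 1 + α with hadef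
  set c := α ^ 2 + 1 - 2 * v with hcdef
  set R := Real.sqrt (a ^ 2 + 3 * c) with hRdef
  have hR0 : 0 ≤ R := Real.sqrt_nonneg _
  have hR2 : R ^ 2 = a ^ 2 + 3 * c := Real.sq_sqrt (by nlinarith)
  have hRa : a ≤ R := by
    rw [hRdef]
    nlinarith [Real.sq_sqrt (show (0:ℝ) ≤ a^2+3*c by nlinarith),
      Real.sqrt_nonneg (a^2+3*c), hc, ha]
  have hR2a : R < 2 * a := by nlinarith
  set s := (a + R) / 3 with hsdef
  have hs0 : 0 < s := by positivity
  have hs : 3 * s ^ 2 = 2 * a * s + c := by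
    rw [hsdef]; field_simp; nlinarith [hR2]
  have hM : Mfun v α = (s ^ 2 - c) * (a - s) / 2 := by
    rw [Mfun, ← hadef, ← hcdef, ← hRdef, hsdef]
    linear_combination (-(2*a-R)/18) * hR2
  have h2s : a ≤ 2 * s := by rw [hsdef]; linarith
  constructor
  · refine ⟨(s ^ 2 - c) / 2, by simp; nlinarith, ?_⟩
    have heq : c + 2 * ((s ^ 2 - c) / 2) = s ^ 2 := by ring
    have hsq : Real.sqrt (c + 2 * ((s ^ 2 - c) / 2)) = s := by
      rw [heq, Real.sqrt_sq hs0.le]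
    show (s ^ 2 - c) / 2 * (a - Real.sqrt (c + 2 * ((s ^ 2 - c) / 2))) = Mfun v α
    rw [hsq, hM]; ring
  · rintro y ⟨p, hp, rfl⟩
    simp only [Set.mem_Ici] at hp
    set w := Real.sqrt (c + 2 * p) with hwdef
    have hw0 : 0 ≤ w := Real.sqrt_nonneg _
    have hw2 : w ^ 2 = c + 2 * p := Real.sq_sqrt (by linarith)
    have hpw : p = (w ^ 2 - c) / 2 := by linarith
    show p * (a - w) ≤ Mfun v α
    rw [hM, hpw]
    have key : (s ^ 2 - c) * (a - s) / 2 - (w ^ 2 - c) / 2 * (a - w)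
        = (w - s) ^ 2 * (w + 2 * s - a) / 2 := by
      linear_combination (w - s) / 2 * hs
    have hpos : 0 ≤ (w - s) ^ 2 * (w + 2 * s - a) / 2 := by
      have : 0 ≤ w + 2 * s - a := by linarith
      positivity
    linarith


set_option maxHeartbeats 1000000 in
lemma pointwise (v α β p : ℝ) (hv0 : 0 < v) (hv1 : v < 1/2) (hα : 0 ≤ α) (hαβ : α < β)
    (hp : 0 < p) (hpv : p < α + v) :
    p * (1 + α - Real.sqrt (α ^ 2 + 1 - 2 * v + 2 * p)) / (1 + α - Real.sqrt (α ^ 2 + 1 - 2 * v))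
      < p * (1 + β - Real.sqrt (β ^ 2 + 1 - 2 * v + 2 * p))
          / (1 + β - Real.sqrt (β ^ 2 + 1 - 2 * v)) := by
  have hβ : 0 < β := lt_of_le_of_lt hα hαβ
  have hcα : (0:ℝ) < α ^ 2 + 1 - 2 * v := by nlinarith
  have hcβ : (0:ℝ) < β ^ 2 + 1 - 2 * v := by nlinarith
  set uα := Real.sqrt (α ^ 2 + 1 - 2 * v) with huαd
  set uβ := Real.sqrt (β ^ 2 + 1 - 2 * v) with huβd
  set wα := Real.sqrt (α ^ 2 + 1 - 2 * v + 2 * p) with hwαd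
  set wβ := Real.sqrt (β ^ 2 + 1 - 2 * v + 2 * p) with hwβd
  have huα2 : uα ^ 2 = α ^ 2 + 1 - 2 * v := Real.sq_sqrt hcα.le
  have huβ2 : uβ ^ 2 = β ^ 2 + 1 - 2 * v := Real.sq_sqrt hcβ.le
  have hwα2 : wα ^ 2 = α ^ 2 + 1 - 2 * v + 2 * p := Real.sq_sqrt (by linarith)
  have hwβ2 : wβ ^ 2 = β ^ 2 + 1 - 2 * v + 2 * p := Real.sq_sqrt (by linarith)
  have huα0 : 0 ≤ uα := Real.sqrt_nonneg _
  have huβ0 : 0 ≤ uβ := Real.sqrt_nonneg _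
  have hwα0 : 0 ≤ wα := Real.sqrt_nonneg _
  have hwβ0 : 0 ≤ wβ := Real.sqrt_nonneg _
  have huw_α : uα < wα := by
    rw [huαd, hwαd]; apply Real.sqrt_lt_sqrt hcα.le; linarith
  have huw_β : uβ < wβ := by
    rw [huβd, hwβd]; apply Real.sqrt_lt_sqrt hcβ.le; linarith
  have huu : uα ≤ uβ := by
    rw [huαd, huβd]; apply Real.sqrt_le_sqrt; nlinarith
  have hww : wα ≤ wβ := by
    rw [hwαd, hwβd]; apply Real.sqrt_le_sqrt; nlinarith
  have hDα : 0 < 1 + α - uα := by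
    have : uα < 1 + α := (Real.sqrt_lt' (by linarith)).mpr (by nlinarith)
    linarith
  have hDβ : 0 < 1 + β - uβ := by
    have : uβ < 1 + β := (Real.sqrt_lt' (by linarith)).mpr (by nlinarith)
    linarith
  have hNα : 0 < 1 + α - wα := by
    have : wα < 1 + α := (Real.sqrt_lt' (by linarith)).mpr (by nlinarith)
    linarith
  have hNβ : 0 < 1 + β - wβ := by
    have : wβ < 1 + β := (Real.sqrt_lt' (by linarith)).mpr (by nlinarith)
    linarith
  rw [div_lt_div_iff₀ hDα hDβ]
  -- sub-facts
  have f1 : uα * wβ ≤ uβ * wα := by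
    have e1 : uα * wβ = Real.sqrt ((α ^ 2 + 1 - 2 * v) * (β ^ 2 + 1 - 2 * v + 2 * p)) := by
      rw [huαd, hwβd, ← Real.sqrt_mul hcα.le]
    have e2 : uβ * wα = Real.sqrt ((β ^ 2 + 1 - 2 * v) * (α ^ 2 + 1 - 2 * v + 2 * p)) := by
      rw [huβd, hwαd, ← Real.sqrt_mul hcβ.le]
    rw [e1, e2]
    apply Real.sqrt_le_sqrt
    nlinarith [mul_pos hp (show (0:ℝ) < β ^ 2 - α ^ 2 by nlinarith)]
  have f2 : wβ - uβ ≤ wα - uα := by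
    have e1 : (wα - uα) * (wα + uα) = 2 * p := by linear_combination hwα2 - huα2
    have e2 : (wβ - uβ) * (wβ + uβ) = 2 * p := by linear_combination hwβ2 - huβ2
    have hsum : 0 < wα + uα := by linarith
    have hd : 0 ≤ wα - uα := by linarith
    nlinarith [e1, e2, mul_le_mul_of_nonneg_left (show wα + uα ≤ wβ + uβ by linarith) hd]
  have g1 : (1 + α) * (wβ - uβ) ≤ (1 + β) * (wα - uα) :=
    mul_le_mul (by linarith) f2 (by linarith) (by linarith)
  have f3 : (1 + β + wβ) * (1 + α + uα) ≤ (1 + α + wα) * (1 + β + uβ) := by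
    nlinarith [g1, f1]
  have f4 : (α + v - p) * (β + v) < (β + v - p) * (α + v) := by
    nlinarith [mul_pos hp (sub_pos.mpr hαβ)]
  have hP2 : 0 < (1 + β + wβ) * (1 + α + uα) := by positivity
  have hQ1 : 0 < (β + v - p) * (α + v) := mul_pos (by linarith) (by linarith)
  have big : (α + v - p) * (β + v) * ((1 + β + wβ) * (1 + α + uα))
      < (β + v - p) * (α + v) * ((1 + α + wα) * (1 + β + uβ)) :=
    lt_of_lt_of_le (mul_lt_mul_of_pos_right f4 hP2)
      (mul_le_mul_of_nonneg_left f3 hQ1.le)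
  -- rationalized forms
  have h1 : 1 + α - wα = 2 * (α + v - p) / (1 + α + wα) := by
    rw [eq_div_iff (by positivity)]; linear_combination -hwα2
  have h2 : 1 + β - uβ = 2 * (β + v) / (1 + β + uβ) := by
    rw [eq_div_iff (by positivity)]; linear_combination -huβ2
  have h3 : 1 + β - wβ = 2 * (β + v - p) / (1 + β + wβ) := by
    rw [eq_div_iff (by positivity)]; linear_combination -hwβ2
  have h4 : 1 + α - uα = 2 * (α + v) / (1 + α + uα) := by
    rw [eq_div_iff (by positivity)]; linear_combination -huα2
  have hb1 : (1 + α + wα) ≠ 0 := by positivity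
  have hb2 : (1 + β + uβ) ≠ 0 := by positivity
  have hb3 : (1 + β + wβ) ≠ 0 := by positivity
  have hb4 : (1 + α + uα) ≠ 0 := by positivity
  have lhs_eq : p * (2 * (α + v - p) / (1 + α + wα)) * (2 * (β + v) / (1 + β + uβ))
      = 4 * p * ((α + v - p) * (β + v)) / ((1 + α + wα) * (1 + β + uβ)) := by
    field_simp; ring
  have rhs_eq : p * (2 * (β + v - p) / (1 + β + wβ)) * (2 * (α + v) / (1 + α + uα))
      = 4 * p * ((β + v - p) * (α + v)) / ((1 + β + wβ) * (1 + α + uα)) := by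
    field_simp; ring
  rw [h1, h2, h3, h4, lhs_eq, rhs_eq, div_lt_div_iff₀ (by positivity) (by positivity)]
  calc 4 * p * ((α + v - p) * (β + v)) * ((1 + β + wβ) * (1 + α + uα))
      = 4 * (p * ((α + v - p) * (β + v) * ((1 + β + wβ) * (1 + α + uα)))) := by ring
    _ < 4 * (p * ((β + v - p) * (α + v) * ((1 + α + wα) * (1 + β + uβ)))) := by
        have := mul_lt_mul_of_pos_left big hp
        linarith
    _ = 4 * p * ((β + v - p) * (α + v)) * ((1 + α + wα) * (1 + β + uβ)) := by ring


set_option maxHeartbeats 1000000 in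
lemma endpoint0 (v : ℝ) (hv0 : 0 < v) (hv1 : v < 1/2) :
    Mfun v 0 / (1 + 0 - Real.sqrt (0 ^ 2 + 1 - 2 * v)) < 2 * v / (3 * Real.sqrt 3) := by
  have hs30 : (0:ℝ) < Real.sqrt 3 := Real.sqrt_pos.mpr (by norm_num)
  set s3 := Real.sqrt 3 with hs3d
  have hs32 : s3 ^ 2 = 3 := Real.sq_sqrt (by norm_num)
  have hs3gt : 3/2 < s3 := by nlinarith
  have hs3lt : s3 < 7/4 := by nlinarith
  set R := Real.sqrt (4 - 6*v) with hRd
  have hR0 : 0 ≤ R := Real.sqrt_nonneg _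
  have hR2 : R ^ 2 = 4 - 6*v := Real.sq_sqrt (by nlinarith)
  have hRlt : R < 2 := by nlinarith
  have hR1 : 1 < R := by nlinarith
  set u := Real.sqrt (1 - 2*v) with hud
  have hu0 : 0 ≤ u := Real.sqrt_nonneg _
  have hu2 : u ^ 2 = 1 - 2*v := Real.sq_sqrt (by nlinarith)
  have hu1 : u < 1 := by nlinarith
  have hMf : Mfun v 0 = (2 - R)^2 * (1 + R) / 27 := by
    rw [Mfun, hRd]
    norm_num
    rw [show (1:ℝ) + 3*(1-2*v) = 4 - 6*v by ring]
  have huu : Real.sqrt (0 ^ 2 + 1 - 2*v) = u := by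
    rw [hud]; norm_num
  have hden : (0:ℝ) < 1 + 0 - Real.sqrt (0 ^ 2 + 1 - 2*v) := by
    rw [huu]; linarith
  rw [div_lt_div_iff₀ hden (by positivity), huu, hMf]
  -- goal : (2-R)^2*(1+R)/27 * (3*s3) < 2*v*(1+0-u)
  have key : s3 * (1 + R) * (1 + u) < (2 + R)^2 := by
    have h3u : 3 * u^2 = R^2 - 1 := by linarith
    nlinarith [mul_nonneg hu0 (sub_nonneg.mpr hRlt.le), sq_nonneg (u - 1),
      sq_nonneg (2*u - 1), mul_nonneg hu0 hR0, sq_nonneg (R - 2), sq_nonneg (u*R - 1)]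
  have hfin : (2-R)^2 * (s3*(1+R)*(1+u)) < (2-R)^2 * (2+R)^2 :=
    mul_lt_mul_of_pos_left key (pow_pos (by linarith) 2)
  have hS : (2-R)^2*(1+R)/27 * (3*s3) * (1+u) < 2*v*(1+0-u) * (1+u) := by
    calc (2-R)^2*(1+R)/27 * (3*s3) * (1+u)
        = (2-R)^2 * (s3*(1+R)*(1+u)) / 9 := by ring
      _ < (2-R)^2 * (2+R)^2 / 9 := by linarith
      _ = 2*v*(1+0-u) * (1+u) := by
          linear_combination (-(4-R^2+6*v)/9)*hR2 + (2*v)*hu2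
  exact lt_of_mul_lt_mul_right (by linarith [hS]) (by linarith : (0:ℝ) ≤ 1 + u)

set_option maxHeartbeats 1000000 in
lemma endpointm (v : ℝ) (hv0 : 0 < v) (hv1 : v < 1/2) :
    2 * v / (3 * Real.sqrt 3) < Mfun v (Real.sqrt (2*v))
      / (1 + Real.sqrt (2*v) - Real.sqrt ((Real.sqrt (2*v)) ^ 2 + 1 - 2 * v)) := by
  have hs30 : (0:ℝ) < Real.sqrt 3 := Real.sqrt_pos.mpr (by norm_num)
  set s3 := Real.sqrt 3 with hs3d
  have hs32 : s3 ^ 2 = 3 := Real.sq_sqrt (by norm_num)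
  have hs3gt : 17/10 < s3 := by nlinarith
  set m := Real.sqrt (2*v) with hmd
  have hm0 : 0 < m := Real.sqrt_pos.mpr (by linarith)
  have hm2 : m ^ 2 = 2*v := Real.sq_sqrt (by linarith)
  have hm1 : m < 1 := by nlinarith
  set a := 1 + m with had
  have ha1 : 1 < a := by linarith
  have ha2 : a < 2 := by linarith
  set R := Real.sqrt (a^2 + 3) with hRd
  have hR0 : 0 ≤ R := Real.sqrt_nonneg _
  have hR2 : R ^ 2 = a^2 + 3 := Real.sq_sqrt (by positivity)
  have hR2' : 2 < R := by nlinarith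
  have hR2a : R < 2*a := by nlinarith
  have hsq1 : Real.sqrt (m ^ 2 + 1 - 2*v) = 1 := by
    rw [show m^2 + 1 - 2*v = 1 by linarith, Real.sqrt_one]
  have hMf : Mfun v m = (2*a - R)^2 * (a + R) / 27 := by
    rw [Mfun, show (1+m)^2 + 3*(m^2+1-2*v) = a^2 + 3 by rw [had]; nlinarith [hm2], ← had, ← hRd]
  have hden : (0:ℝ) < 1 + m - Real.sqrt (m^2 + 1 - 2*v) := by rw [hsq1]; linarith
  rw [div_lt_div_iff₀ (by positivity) hden, hsq1]
  clear_value s3 m a R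
  -- goal : 2*v*(1+m-1) < Mfun v m * (3*s3)
  have key : (a-1)*(2*a+R)^2 < s3*(a+1)^2*(a+R) := by
    have hub : R ≤ 2 + (13/20)*(a-1) := by nlinarith [hR2]
    have L2 : (2*a+R)^2 ≤ (2*a + 2 + (13/20)*(a-1))^2 := by nlinarith [hR2']
    have L3 : (a-1)*(2*a+R)^2 ≤ (a-1)*(2*a + 2 + (13/20)*(a-1))^2 :=
      mul_le_mul_of_nonneg_left L2 (by linarith)
    have R4 : (17/10)*((a+1)^2*(a+2)) ≤ s3*((a+1)^2*(a+R)) := by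
      have h1 : (0:ℝ) < (a+1)^2*(a+2) := by positivity
      have h2 : (a+1)^2*(a+2) ≤ (a+1)^2*(a+R) :=
        mul_le_mul_of_nonneg_left (by linarith) (by positivity)
      calc (17/10)*((a+1)^2*(a+2)) ≤ (17/10)*((a+1)^2*(a+R)) := by linarith
        _ ≤ s3*((a+1)^2*(a+R)) :=
            mul_le_mul_of_nonneg_right (by linarith)
              (mul_nonneg (sq_nonneg _) (by linarith))
    have poly : (a-1)*(2*a + 2 + (13/20)*(a-1))^2 < (17/10)*((a+1)^2*(a+2)) := by
      nlinarith [mul_nonneg (show (0:ℝ) ≤ a-1 by linarith) (show (0:ℝ) ≤ 2-a by linarith),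
        mul_nonneg (mul_nonneg (show (0:ℝ) ≤ a-1 by linarith) (show (0:ℝ) ≤ a-1 by linarith))
          (show (0:ℝ) ≤ 2-a by linarith)]
    linarith [L3, R4, poly]
  have q1 : Mfun v m * (3*s3) * (2*a+R)^2 = s3*(a+R)*((a-1)^2*(a+1)^2) := by
    rw [hMf]; linear_combination (-(s3*(a+R)*(7*a^2-3-R^2))/9) * hR2
  have q2 : 2*v*(1+m-1) = (a-1)^3 := by
    rw [had]; ring_nf; nlinarith [hm2]
  have hQ : (0:ℝ) < (2*a+R)^2 := pow_pos (by linarith) 2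
  have main : 2*v*(1+m-1) * (2*a+R)^2 < Mfun v m * (3*s3) * (2*a+R)^2 := by
    rw [q1, q2]
    nlinarith [mul_lt_mul_of_pos_left key (pow_pos (show (0:ℝ) < a-1 by linarith) 2)]
  exact lt_of_mul_lt_mul_right main hQ.le

lemma Mfun_pos (v α : ℝ) (hv0 : 0 < v) (hv1 : v < 1/2) (hα : 0 ≤ α) : 0 < Mfun v α := by
  rw [Mfun]
  set R := Real.sqrt ((1+α)^2 + 3*(α^2+1-2*v)) with hRd
  have hR0 : 0 ≤ R := Real.sqrt_nonneg _
  have hR2 : R ^ 2 = (1+α)^2 + 3*(α^2+1-2*v) := Real.sq_sqrt (by nlinarith)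
  have h2a : R < 2*(1+α) := by nlinarith
  have h1 : 0 < (2*(1+α) - R)^2 := pow_pos (by linarith) 2
  have h2 : 0 < (1+α) + R := by linarith
  positivity

set_option maxHeartbeats 1000000 in
/-- With 0 < v < 1/2 and
ζ̂(α) = (sup_{p ≥ 0} p(1+α−√(α²+1−2v+2p))) / (1 + α − √(α² + 1 − 2v)),
there exists α₁ ∈ (0, √(2v)) such that ζ̂(α) < 2v/(3√3) for all α ∈ [0, α₁)
and ζ̂(α) > 2v/(3√3) for all α ∈ (α₁, 1]. -/
theorem stmt_12 (v : ℝ) (hv : 0 < v ∧ v < 1 / 2)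
    (ζ : ℝ → ℝ)
    (hζ : ∀ α, ζ α = (sSup ((fun p =>
        p * (1 + α - Real.sqrt (α ^ 2 + 1 - 2 * v + 2 * p))) '' Set.Ici (0:ℝ)))
      / (1 + α - Real.sqrt (α ^ 2 + 1 - 2 * v))) :
    ∃ α₁ ∈ Set.Ioo (0:ℝ) (Real.sqrt (2 * v)),
      (∀ α ∈ Set.Ico (0:ℝ) α₁, ζ α < 2 * v / (3 * Real.sqrt 3)) ∧
      (∀ α ∈ Set.Ioc α₁ (1:ℝ), 2 * v / (3 * Real.sqrt 3) < ζ α) := by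
  obtain ⟨hv0, hv1⟩ := hv
  set g : ℝ → ℝ := fun α => Mfun v α / (1 + α - Real.sqrt (α ^ 2 + 1 - 2 * v)) with hgdef
  have hζg : ∀ α : ℝ, 0 ≤ α → ζ α = g α := by
    intro α hα
    rw [hζ α, IsGreatest.csSup_eq (sup_isGreatest v α hv0 hv1 hα)]
  have mono : ∀ a b : ℝ, 0 ≤ a → a < b → g a < g b := by
    intro a b ha hab
    obtain ⟨p, hp0, hFp⟩ := (sup_isGreatest v a hv0 hv1 ha).1
    simp only [Set.mem_Ici] at hp0
    simp only at hFp
    have hMpos : 0 < Mfun v a := Mfun_pos v a hv0 hv1 ha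
    have hw0 : 0 ≤ Real.sqrt (a ^ 2 + 1 - 2 * v + 2 * p) := Real.sqrt_nonneg _
    have hppos : 0 < p := by
      rcases eq_or_lt_of_le hp0 with h | h
      · exfalso; rw [← h] at hFp; simp at hFp; linarith
      · exact h
    have hpx : 0 < p * (1 + a - Real.sqrt (a ^ 2 + 1 - 2 * v + 2 * p)) := hFp ▸ hMpos
    have hfac : 0 < 1 + a - Real.sqrt (a ^ 2 + 1 - 2 * v + 2 * p) := by
      by_contra h; push_neg at h
      nlinarith [mul_nonpos_of_nonneg_of_nonpos hppos.le h]
    have hw2 : (Real.sqrt (a ^ 2 + 1 - 2 * v + 2 * p)) ^ 2 = a ^ 2 + 1 - 2 * v + 2 * p :=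
      Real.sq_sqrt (by nlinarith)
    have hpv : p < a + v := by nlinarith [hw2, hw0, hfac]
    have step1 : g a < p * (1 + b - Real.sqrt (b ^ 2 + 1 - 2 * v + 2 * p))
        / (1 + b - Real.sqrt (b ^ 2 + 1 - 2 * v)) := by
      rw [hgdef]; simp only
      rw [← hFp]
      exact pointwise v a b p hv0 hv1 ha hab hppos hpv
    have hDb : 0 < 1 + b - Real.sqrt (b ^ 2 + 1 - 2 * v) := by
      have : Real.sqrt (b ^ 2 + 1 - 2 * v) < 1 + b :=
        (Real.sqrt_lt' (by linarith)).mpr (by nlinarith)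
      linarith
    have hub : p * (1 + b - Real.sqrt (b ^ 2 + 1 - 2 * v + 2 * p)) ≤ Mfun v b :=
      (sup_isGreatest v b hv0 hv1 (by linarith)).2
        (Set.mem_image_of_mem _ (Set.mem_Ici.mpr hp0))
    have step2 : p * (1 + b - Real.sqrt (b ^ 2 + 1 - 2 * v + 2 * p))
        / (1 + b - Real.sqrt (b ^ 2 + 1 - 2 * v)) ≤ g b := by
      rw [hgdef]; simp only
      exact (div_le_div_iff_of_pos_right hDb).mpr hub
    linarith
  have hm0 : 0 < Real.sqrt (2 * v) := Real.sqrt_pos.mpr (by linarith)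
  have hm1 : Real.sqrt (2 * v) < 1 := (Real.sqrt_lt' one_pos).mpr (by linarith)
  have hcont : ContinuousOn g (Set.Icc 0 (Real.sqrt (2 * v))) := by
    apply ContinuousOn.div
    · apply Continuous.continuousOn
      unfold Mfun
      fun_prop
    · fun_prop
    · intro x hx
      have hx0 : 0 ≤ x := hx.1
      have : Real.sqrt (x ^ 2 + 1 - 2 * v) < 1 + x :=
        (Real.sqrt_lt' (by linarith)).mpr (by nlinarith)
      intro hcontra; linarith
  have hT0 : g 0 < 2 * v / (3 * Real.sqrt 3) := by
    have := endpoint0 v hv0 hv1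
    rw [hgdef]; simp only
    convert this using 3 <;> norm_num
  have hTm : 2 * v / (3 * Real.sqrt 3) < g (Real.sqrt (2 * v)) := by
    have := endpointm v hv0 hv1
    rw [hgdef]; simp only
    exact this
  obtain ⟨α₁, hmem, hgα₁⟩ :=
    intermediate_value_Ioo hm0.le hcont (Set.mem_Ioo.mpr ⟨hT0, hTm⟩)
  refine ⟨α₁, hmem, ?_, ?_⟩
  · rintro α ⟨hα0, hα1⟩
    rw [hζg α hα0, ← hgα₁]
    exact mono α α₁ hα0 hα1
  · rintro α ⟨h1, h2⟩
    rw [hζg α (by linarith [hmem.1])]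
    rw [← hgα₁]
    exact mono α₁ α hmem.1.le h1
end

section
/- Fix real numbers v with 0 < v < 1/2 and α > 0, and define W₂(y) = ∫_{√(y² + α² − 2v) − α}^{y} (αx + v − (y² − x²)/2) dx for y ∈ [√(2v), 1]. Then W₂′(y) = y(√(α² + y² − 2v) − y) + v and W₂″(y) = (y − √(α² + y² − 2v))² / √(α² + y² − 2v) ≥ 0; in particular W₂ is convex on [√(2v), 1]. -/
/-!
The integrand `u(y, x)` vanishes at the lower endpoint `ℓ(y) = √(α² + y² − 2v) − α` (the marginal
user is indifferent), so when differentiating `W(y) = ∫_{ℓ(y)}^y u(y, x) dx` the moving lower limit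
contributes nothing; with `∂u/∂y = −y` this gives
`W'(y) = u(y, y) − y (y − ℓ(y)) = y (√(α² + y² − 2v) − y) + v`. Differentiating once
more gives `(y − √(α² + y² − 2v))² / √(α² + y² − 2v) ≥ 0`, and a function with nonnegative second
derivative is convex.
-/

namespace ContentModeration

variable (α v : ℝ)

noncomputable def utility (y x : ℝ) : ℝ := α * x + v - (y ^ 2 - x ^ 2) / 2

noncomputable def lowestParticipant (y : ℝ) : ℝ := √(α ^ 2 + y ^ 2 - 2 * v) - α

noncomputable def welfare (y : ℝ) : ℝ := ∫ x in lowestParticipant α v y..y, utility α v y x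

noncomputable def utilityPrimitive (y x : ℝ) : ℝ :=
  α * x ^ 2 / 2 + v * x - y ^ 2 * x / 2 + x ^ 3 / 6

variable {α v}

lemma utility_lowestParticipant {y : ℝ} (h : 0 ≤ α ^ 2 + y ^ 2 - 2 * v) :
    utility α v y (lowestParticipant α v y) = 0 := by
  have hsq := Real.sq_sqrt h
  unfold utility lowestParticipant
  linear_combination hsq / 2

lemma hasDerivAt_utilityPrimitive (y x : ℝ) :
    HasDerivAt (utilityPrimitive α v y) (utility α v y x) x := by
  have h := ((((hasDerivAt_pow 2 x).const_mul α).div_const 2).add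
    ((hasDerivAt_id' x).const_mul v)).sub
    (((hasDerivAt_id' x).const_mul (y ^ 2)).div_const 2) |>.add ((hasDerivAt_pow 3 x).div_const 6)
  refine h.congr_deriv ?_
  unfold utility
  ring

lemma hasDerivAt_utilityPrimitive_comp {g : ℝ → ℝ} {g' y : ℝ} (hg : HasDerivAt g g' y) :
    HasDerivAt (fun z => utilityPrimitive α v z (g z)) (-y * g y + utility α v y (g y) * g') y := by
  have h := (((((hg.pow 2).const_mul α).div_const 2).add (hg.const_mul v)).sub
    (((hasDerivAt_pow 2 y).mul hg).div_const 2)).add ((hg.pow 3).div_const 6)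
  refine h.congr_deriv ?_
  unfold utility
  ring

lemma hasDerivAt_sqrt_disc {y : ℝ} (h : 0 < α ^ 2 + y ^ 2 - 2 * v) :
    HasDerivAt (fun z => √(α ^ 2 + z ^ 2 - 2 * v)) (y / √(α ^ 2 + y ^ 2 - 2 * v)) y := by
  have hdisc : HasDerivAt (fun z => α ^ 2 + z ^ 2 - 2 * v) (2 * y) y := by
    simpa using ((hasDerivAt_pow 2 y).const_add (α ^ 2)).sub_const (2 * v)
  refine (hdisc.sqrt h.ne').congr_deriv ?_
  field_simp

lemma welfare_eq (y : ℝ) :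
    welfare α v y = utilityPrimitive α v y y - utilityPrimitive α v y (lowestParticipant α v y) :=
  intervalIntegral.integral_eq_sub_of_hasDerivAt (fun x _ => hasDerivAt_utilityPrimitive y x)
    (Continuous.intervalIntegrable (by unfold utility; fun_prop) _ _)

lemma hasDerivAt_welfare {y : ℝ} (h : 0 < α ^ 2 + y ^ 2 - 2 * v) :
    HasDerivAt (welfare α v) (y * (√(α ^ 2 + y ^ 2 - 2 * v) - y) + v) y := by
  have hprim := (hasDerivAt_utilityPrimitive_comp (α := α) (v := v) (hasDerivAt_id' y)).fun_sub
    (hasDerivAt_utilityPrimitive_comp (α := α) (v := v) (g := lowestParticipant α v)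
      ((hasDerivAt_sqrt_disc h).sub_const α))
  rw [utility_lowestParticipant h.le] at hprim
  rw [show welfare α v = _ from funext welfare_eq]
  refine hprim.congr_deriv ?_
  unfold utility lowestParticipant
  ring

lemma hasDerivAt_welfare_deriv {y : ℝ} (h : 0 < α ^ 2 + y ^ 2 - 2 * v) :
    HasDerivAt (fun z => z * (√(α ^ 2 + z ^ 2 - 2 * v) - z) + v)
      ((y - √(α ^ 2 + y ^ 2 - 2 * v)) ^ 2 / √(α ^ 2 + y ^ 2 - 2 * v)) y := by
  have hs : √(α ^ 2 + y ^ 2 - 2 * v) ≠ 0 := (Real.sqrt_pos.mpr h).ne'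
  have hprod := (hasDerivAt_id' y).fun_mul ((hasDerivAt_sqrt_disc h).fun_sub (hasDerivAt_id' y))
  refine (hprod.add_const v).congr_deriv ?_
  field_simp
  ring

lemma deriv_deriv_welfare {y : ℝ} (h : 0 < α ^ 2 + y ^ 2 - 2 * v) :
    deriv (deriv (welfare α v)) y =
      (y - √(α ^ 2 + y ^ 2 - 2 * v)) ^ 2 / √(α ^ 2 + y ^ 2 - 2 * v) := by
  have hopen : IsOpen {z : ℝ | 0 < α ^ 2 + z ^ 2 - 2 * v} :=
    isOpen_lt continuous_const (by fun_prop)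
  have hderiv : deriv (welfare α v) =ᶠ[nhds y] fun z => z * (√(α ^ 2 + z ^ 2 - 2 * v) - z) + v := by
    filter_upwards [hopen.mem_nhds h] with z hz using (hasDerivAt_welfare hz).deriv
  rw [hderiv.deriv_eq]
  exact (hasDerivAt_welfare_deriv h).deriv

lemma disc_pos {y : ℝ} (hα : α ≠ 0) (hy : √(2 * v) ≤ y) : 0 < α ^ 2 + y ^ 2 - 2 * v := by
  have h2v := (Real.sqrt_le_iff.mp hy).2
  have hα2 : 0 < α ^ 2 := by positivity
  linarith

end ContentModeration

open ContentModeration in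
theorem stmt_15_general (v α : ℝ) (hα : 0 < α)
    (W : ℝ → ℝ)
    (hW : ∀ y, W y = ∫ x in (Real.sqrt (y ^ 2 + α ^ 2 - 2 * v) - α)..y,
      (α * x + v - (y ^ 2 - x ^ 2) / 2)) :
    (∀ y ∈ Set.Icc (Real.sqrt (2 * v)) 1,
      deriv W y = y * (Real.sqrt (α ^ 2 + y ^ 2 - 2 * v) - y) + v ∧
      deriv (deriv W) y =
        (y - Real.sqrt (α ^ 2 + y ^ 2 - 2 * v)) ^ 2
          / Real.sqrt (α ^ 2 + y ^ 2 - 2 * v) ∧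
      0 ≤ deriv (deriv W) y) ∧
    ConvexOn ℝ (Set.Icc (Real.sqrt (2 * v)) 1) W := by
  obtain rfl : W = welfare α v := funext fun y => by
    rw [hW, welfare, lowestParticipant, add_comm (α ^ 2)]; rfl
  have hdisc (y : ℝ) (hy : y ∈ Set.Icc (√(2 * v)) 1) := disc_pos hα.ne' hy.1
  refine ⟨fun y hy => ⟨(hasDerivAt_welfare (hdisc y hy)).deriv,
    deriv_deriv_welfare (hdisc y hy), ?_⟩, ?_⟩
  · rw [deriv_deriv_welfare (hdisc y hy)]
    positivity
  · refine convexOn_of_hasDerivWithinAt2_nonneg (convex_Icc _ _)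
      (f'' := fun y => (y - √(α ^ 2 + y ^ 2 - 2 * v)) ^ 2 / √(α ^ 2 + y ^ 2 - 2 * v))
      (fun y hy => (hasDerivAt_welfare (hdisc y hy)).continuousAt.continuousWithinAt)
      (fun y hy => (hasDerivAt_welfare (hdisc y (interior_subset hy))).hasDerivWithinAt)
      (fun y hy => (hasDerivAt_welfare_deriv (hdisc y (interior_subset hy))).hasDerivWithinAt)
      (fun y _ => by positivity)

/-- With 0 < v < 1/2, α > 0, and
W₂(y) = ∫_{√(y²+α²−2v)−α}^{y} (αx + v − (y² − x²)/2) dx, for every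
y ∈ [√(2v), 1] we have W₂′(y) = y(√(α² + y² − 2v) − y) + v and
W₂″(y) = (y − √(α² + y² − 2v))²/√(α² + y² − 2v) ≥ 0; in particular W₂ is
convex on [√(2v), 1]. -/
theorem stmt_15 (v α : ℝ) (hv : 0 < v ∧ v < 1 / 2) (hα : 0 < α)
    (W : ℝ → ℝ)
    (hW : ∀ y, W y = ∫ x in (Real.sqrt (y ^ 2 + α ^ 2 - 2 * v) - α)..y,
      (α * x + v - (y ^ 2 - x ^ 2) / 2)) :
    (∀ y ∈ Set.Icc (Real.sqrt (2 * v)) 1,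
      deriv W y = y * (Real.sqrt (α ^ 2 + y ^ 2 - 2 * v) - y) + v ∧
      deriv (deriv W) y =
        (y - Real.sqrt (α ^ 2 + y ^ 2 - 2 * v)) ^ 2
          / Real.sqrt (α ^ 2 + y ^ 2 - 2 * v) ∧
      0 ≤ deriv (deriv W) y) ∧
    ConvexOn ℝ (Set.Icc (Real.sqrt (2 * v)) 1) W :=
  stmt_15_general v α hα W hW
end

section
/- For all real numbers v and α with 0 < v < 1/2 and 0 ≤ α ≤ √(v/2), one has α(5α + √(α² + 4v) − 4√(α² + 1 − 2v)) < 2v. -/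
set_option maxHeartbeats 1000000 in
private lemma auxD' (v x : ℝ) (hv0 : 0 < v) (hv2 : v < 1/2) (hx : x ≤ v/2)
    (hP : 0 < 5*x - 2*v) :
    4*(5*x-2*v)^2*(x*(x+4*v)) < (-10*x^2 - 16*v*x + 16*x - 4*v^2)^2 := by
  nlinarith [sq_nonneg (v^2 - 4*x), mul_pos hP hP, mul_pos hv0 hv0,
    mul_pos (mul_pos hv0 hv0) hv0,
    mul_nonneg (mul_nonneg (le_of_lt hP) (by linarith : (0:ℝ) ≤ v/2 - x)) (by linarith : (0:ℝ) ≤ 1/2 - v),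
    mul_nonneg (le_of_lt hP) (by linarith : (0:ℝ) ≤ 1/2 - v),
    mul_nonneg (mul_nonneg (le_of_lt hP) (le_of_lt hP)) (by linarith : (0:ℝ) ≤ 1/2 - v),
    mul_nonneg (by linarith : (0:ℝ) ≤ v/2 - x) (by linarith : (0:ℝ) ≤ 1/2 - v),
    mul_pos hv0 hP, mul_pos (mul_pos hv0 hv0) hP,
    sq_nonneg (x - v/2), sq_nonneg (5*x - 2*v)]

private lemma auxKey (v x u : ℝ) (hv0 : 0 < v) (hv2 : v < 1/2) (hx0 : 0 ≤ x)
    (hx : x ≤ v/2) (hu0 : 0 ≤ u) (hu2 : u^2 = x*(x+4*v))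
    (hc : 0 < 5*x - 2*v + u) :
    (5*x - 2*v + u)^2 < 16*x*(x+1-2*v) := by
  rcases le_or_gt (5*x - 2*v) 0 with hP | hP
  · -- 2P(P+u) ≤ 0 so (P+u)^2 ≤ u^2 - P^2
    have h1 : (5*x-2*v) * (5*x-2*v+u) ≤ 0 :=
      mul_nonpos_of_nonpos_of_nonneg hP (le_of_lt hc)
    have hx0' : 0 < x := by nlinarith
    nlinarith [sq_nonneg (5*x-2*v), mul_pos hv0 hx0', mul_pos hx0' hx0',
      mul_pos hv0 hv0, mul_pos (mul_pos hv0 hx0') hx0']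
  · have hQ : 0 < -10*x^2 - 16*v*x + 16*x - 4*v^2 := by
      nlinarith [mul_pos hv0 hv0, mul_pos hP hP, mul_pos hv0 hP,
        mul_nonneg (by linarith : (0:ℝ) ≤ v/2 - x) (by linarith : (0:ℝ) ≤ 1/2 - v),
        mul_pos hv0 (by linarith : (0:ℝ) < 2*v/5)]
    have hD := auxD' v x hv0 hv2 hx hP
    have h2Pu : 2*(5*x-2*v)*u < -10*x^2 - 16*v*x + 16*x - 4*v^2 := by
      have hl : 0 ≤ 2*(5*x-2*v)*u := by positivity
      nlinarith [hD, hQ, hu2]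
    nlinarith [h2Pu, hu2]

/-- For 0 < v < 1/2 and 0 ≤ α ≤ √(v/2),
α(5α + √(α² + 4v) − 4√(α² + 1 − 2v)) < 2v. -/
theorem stmt_16 (v α : ℝ) (hv : 0 < v ∧ v < 1 / 2)
    (hα : 0 ≤ α ∧ α ≤ Real.sqrt (v / 2)) :
    α * (5 * α + Real.sqrt (α ^ 2 + 4 * v)
      - 4 * Real.sqrt (α ^ 2 + 1 - 2 * v)) < 2 * v := by
  obtain ⟨hv0, hv2⟩ := hv
  obtain ⟨ha0, ha1⟩ := hα
  have ha2 : α ^ 2 ≤ v / 2 := by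
    have h := Real.sq_sqrt (by linarith : (0:ℝ) ≤ v / 2)
    nlinarith [mul_self_le_mul_self ha0 ha1]
  set s := Real.sqrt (α ^ 2 + 4 * v) with hs
  set t := Real.sqrt (α ^ 2 + 1 - 2 * v) with ht
  have hs0 : 0 ≤ s := Real.sqrt_nonneg _
  have ht0 : 0 ≤ t := Real.sqrt_nonneg _
  have hs2 : s ^ 2 = α ^ 2 + 4 * v := Real.sq_sqrt (by nlinarith)
  have ht2 : t ^ 2 = α ^ 2 + 1 - 2 * v := Real.sq_sqrt (by nlinarith)
  have hu0 : 0 ≤ α * s := mul_nonneg ha0 hs0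
  have hat : 0 ≤ α * t := mul_nonneg ha0 ht0
  have hgoal : 5 * α ^ 2 + α * s - 4 * (α * t) < 2 * v := by
    rcases le_or_gt (5 * α ^ 2 - 2 * v + α * s) 0 with hc | hc
    · rcases eq_or_lt_of_le ha0 with h0 | h0
      · rw [← h0] at *; nlinarith
      · have htpos : 0 < t := Real.sqrt_pos.mpr (by nlinarith)
        nlinarith [mul_pos h0 htpos]
    · have hu2 : (α * s) ^ 2 = α ^ 2 * (α ^ 2 + 4 * v) := by
        rw [mul_pow, hs2]
      have hkey := auxKey v (α ^ 2) (α * s) hv0 hv2 (sq_nonneg α) ha2 hu0 hu2 hc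
      have h16 : 16 * α ^ 2 * (α ^ 2 + 1 - 2 * v) = (4 * (α * t)) ^ 2 := by
        rw [mul_pow, mul_pow, ht2]; ring
      rw [h16] at hkey
      nlinarith [hkey, hc, hat]
  linarith [hgoal]
end

section
/- For every real v with 0 < v < 1/2, one has 2v^{3/2} + (2√(1 − 2v) − 3)v − √(1 − 2v) + 1 > 0. -/
/-- For every 0 < v < 1/2,
2v^{3/2} + (2√(1 − 2v) − 3)v − √(1 − 2v) + 1 > 0. -/
theorem stmt_17 (v : ℝ) (hv : 0 < v ∧ v < 1 / 2) :
    0 < 2 * v ^ ((3:ℝ) / 2) + (2 * Real.sqrt (1 - 2 * v) - 3) * v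
      - Real.sqrt (1 - 2 * v) + 1 := by
  obtain ⟨hv0, hv2⟩ := hv
  set s := Real.sqrt (1 - 2 * v) with hs
  set t := Real.sqrt v with ht
  have hs2 : s ^ 2 = 1 - 2 * v := Real.sq_sqrt (by linarith)
  have hs0 : 0 ≤ s := Real.sqrt_nonneg _
  have hs1 : s < 1 := by
    rw [hs]
    have : (1 - 2 * v) < 1 := by linarith
    calc Real.sqrt (1 - 2 * v) < Real.sqrt 1 := by
          apply Real.sqrt_lt_sqrt (by linarith) this
      _ = 1 := Real.sqrt_one
  have ht2 : t ^ 2 = v := Real.sq_sqrt hv0.le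
  have ht0 : 0 < t := Real.sqrt_pos.mpr hv0
  have h32 : v ^ ((3:ℝ)/2) = t ^ 3 := by
    rw [show (3:ℝ)/2 = (1/2) * (3:ℕ) by norm_num, Real.rpow_mul hv0.le,
      Real.rpow_natCast, ht, Real.sqrt_eq_rpow]
  rw [h32]
  have hveq : v = (1 - s ^ 2) / 2 := by linarith
  have hA : 2 * t ^ 3 + (2 * s - 3) * v - s + 1
      = 2 * t ^ 3 - (1 - s) ^ 2 * (2 * s + 1) / 2 := by
    rw [hveq]; ring
  rw [hA]
  have ht6 : t ^ 6 = ((1 - s ^ 2) / 2) ^ 3 := by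
    have : t ^ 6 = (t ^ 2) ^ 3 := by ring
    rw [this, ht2, hveq]
  have hkey : 0 < (1 - s) ^ 3 * (1 + 3 * s + 6 * s ^ 2 + 6 * s ^ 3) := by
    apply mul_pos (pow_pos (by linarith) 3)
    nlinarith [sq_nonneg s, pow_nonneg hs0 3]
  have hsq : ((1 - s) ^ 2 * (2 * s + 1) / 2) ^ 2 < (2 * t ^ 3) ^ 2 := by
    nlinarith [ht6, hkey]
  have ha0 : 0 ≤ (1 - s) ^ 2 * (2 * s + 1) / 2 := by positivity
  have htp : 0 < 2 * t ^ 3 := by positivity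
  nlinarith [hsq, ha0, htp]
end

section
/- For all real numbers v and α with 0 < v < 1/2 and 0 ≤ α < √(v/2), the chain of inequalities √(2v/3) < √v ≤ (α + √(α² + 4v))/2 < √(2v) holds. -/
/-- For 0 < v < 1/2 and 0 ≤ α < √(v/2), the chain
√(2v/3) < √v ≤ (α + √(α² + 4v))/2 < √(2v) holds. -/
theorem stmt_19 (v α : ℝ) (hv : 0 < v ∧ v < 1 / 2)
    (hα : 0 ≤ α ∧ α < Real.sqrt (v / 2)) :
    Real.sqrt (2 * v / 3) < Real.sqrt v ∧
    Real.sqrt v ≤ (α + Real.sqrt (α ^ 2 + 4 * v)) / 2 ∧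
    (α + Real.sqrt (α ^ 2 + 4 * v)) / 2 < Real.sqrt (2 * v) := by
  obtain ⟨hv0, hv2⟩ := hv
  obtain ⟨hα0, hα1⟩ := hα
  refine ⟨?_, ?_, ?_⟩
  · exact Real.sqrt_lt_sqrt (by linarith) (by linarith)
  · have h1 : Real.sqrt (4 * v) ≤ Real.sqrt (α ^ 2 + 4 * v) :=
      Real.sqrt_le_sqrt (by nlinarith)
    have h2 : Real.sqrt (4 * v) = 2 * Real.sqrt v := by
      rw [show (4 : ℝ) * v = 2 ^ 2 * v by ring, Real.sqrt_mul (by positivity),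
        Real.sqrt_sq (by norm_num)]
    nlinarith
  · have hs2v' : 0 < Real.sqrt (2 * v) := Real.sqrt_pos.mpr (by linarith)
    have hαv : α * Real.sqrt (2 * v) < v := by
      have := mul_lt_mul_of_pos_right hα1 hs2v'
      have heq : Real.sqrt (v / 2) * Real.sqrt (2 * v) = v := by
        rw [← Real.sqrt_mul (by linarith)]
        rw [show v / 2 * (2 * v) = v ^ 2 by ring, Real.sqrt_sq hv0.le]
      linarith
    have hs2v : 0 < Real.sqrt (2 * v) := Real.sqrt_pos.mpr (by linarith)
    have hα2v : α < Real.sqrt (2 * v) := by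
      nlinarith [Real.sq_sqrt (show (0:ℝ) ≤ 2 * v by linarith)]
    have key : Real.sqrt (α ^ 2 + 4 * v) < 2 * Real.sqrt (2 * v) - α := by
      rw [show (2 * Real.sqrt (2 * v) - α) = Real.sqrt ((2 * Real.sqrt (2 * v) - α) ^ 2) from
        (Real.sqrt_sq (by linarith)).symm]
      apply Real.sqrt_lt_sqrt (by positivity)
      nlinarith [Real.sq_sqrt (show (0:ℝ) ≤ 2 * v by linarith)]
    linarith
end
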